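/- arXiv:2104.09657 — 6 statements merged into one kernel-verified Lean document; each statement's English description precedes it below -/
import Mathlib

section
/- Let K ⊆ L be fields, let D be a subring of K, and set T = K+XL[X] and R = D+XL[X]. Then R is atomic if and only if T is atomic and D is a field. -/
open Polynomial

/-- The composite `A + X B[X]`: the subring of the polynomial ring `B[X]` consisting of
polynomials whose constant coefficient lies in the subring `A`. -/
def composite {B : Type*} [CommRing B] (A : Subring B) : Subring (Polynomial B) where
  carrier := {f | f.coeff 0 ∈ A}
  mul_mem' := fun hf hg => by simpa [Polynomial.mul_coeff_zero] using A.mul_mem hf hg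
  one_mem' := by simpa using A.one_mem
  add_mem' := fun hf hg => by simpa using A.add_mem hf hg
  zero_mem' := by simpa using A.zero_mem
  neg_mem' := fun hf => by simpa using A.neg_mem hf

/-- An integral domain is atomic if every nonzero nonunit is a finite product of
irreducible elements. -/
def IsAtomicDomain (R : Type*) [CommRing R] : Prop :=
  ∀ a : R, a ≠ 0 → ¬IsUnit a →
    ∃ s : Multiset R, (∀ x ∈ s, Irreducible x) ∧ s.prod = a

section Aux

variable {L : Type*} [Field L]

lemma mem_composite {A : Subring L} {f : L[X]} : f ∈ composite A ↔ f.coeff 0 ∈ A := Iff.rfl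

lemma unit_char {A : Subring L} {x : composite A} (h : IsUnit x) :
    ∃ c : L, c ≠ 0 ∧ c⁻¹ ∈ A ∧ (x : L[X]) = C c := by
  obtain ⟨y, hy⟩ := h.exists_right_inv
  have hval : (x : L[X]) * (y : L[X]) = 1 := by
    have := congrArg (Subtype.val) hy
    simpa using this
  have hux : IsUnit (x : L[X]) := IsUnit.of_mul_eq_one _ hval
  have hdx : (x : L[X]).natDegree = 0 := natDegree_eq_zero_of_isUnit hux
  have hx0 : (x : L[X]) ≠ 0 := hux.ne_zero
  have hxC : (x : L[X]) = C ((x : L[X]).coeff 0) := eq_C_of_natDegree_eq_zero hdx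
  set c := (x : L[X]).coeff 0 with hc
  have hcne : c ≠ 0 := by
    intro h0
    apply hx0
    rw [hxC, h0, map_zero]
  refine ⟨c, hcne, ?_, hxC⟩
  have hyval : (y : L[X]).coeff 0 ∈ A := y.2
  have : c * (y : L[X]).coeff 0 = 1 := by
    have := congrArg (fun p : L[X] => p.coeff 0) hval
    simpa [mul_coeff_zero] using this
  have : (y : L[X]).coeff 0 = c⁻¹ := eq_inv_of_mul_eq_one_right
    (by first | exact this | (rw [mul_comm]; exact this))
  rwa [← this]

/-- Nonzero constants in `A` with inverse in `A` are units of `composite A`. -/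
lemma isUnit_mk {A : Subring L} {p : L[X]} (hp : p ∈ composite A)
    (h0 : p ≠ 0) (hd : p.natDegree = 0) (hinv : (p.coeff 0)⁻¹ ∈ A) :
    IsUnit (⟨p, hp⟩ : composite A) := by
  have hxC : p = C (p.coeff 0) := eq_C_of_natDegree_eq_zero hd
  set c := p.coeff 0 with hc
  have hcne : c ≠ 0 := by
    intro h0'
    apply h0
    rw [hxC, h0', map_zero]
  refine IsUnit.of_mul_eq_one ⟨C c⁻¹, by simpa [mem_composite] using hinv⟩ ?_
  apply Subtype.ext
  show p * C c⁻¹ = 1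
  rw [hxC, ← C_mul, mul_inv_cancel₀ hcne, C_1]

/-- A subring closed under inverses of nonzero elements. -/
def InvMem (A : Subring L) : Prop := ∀ a : L, a ∈ A → a ≠ 0 → a⁻¹ ∈ A

lemma natDegree_pos_of_nonunit {A : Subring L} (hA : InvMem A) {x : composite A}
    (hx0 : x ≠ 0) (hxu : ¬IsUnit x) : 1 ≤ (x : L[X]).natDegree := by
  by_contra h
  have hd : (x : L[X]).natDegree = 0 := by omega
  have hv0 : (x : L[X]) ≠ 0 := fun h => hx0 (Subtype.ext h)
  have hc0 : (x : L[X]).coeff 0 ≠ 0 := by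
    intro h0
    apply hv0
    rw [eq_C_of_natDegree_eq_zero hd, h0, map_zero]
  exact hxu (isUnit_mk x.2 hv0 hd (hA _ x.2 hc0))

lemma atomic_of_invMem {A : Subring L} (hA : InvMem A) : IsAtomicDomain (composite A) := by
  have key : ∀ n : ℕ, ∀ a : composite A, (a : L[X]).natDegree ≤ n → a ≠ 0 → ¬IsUnit a →
      ∃ s : Multiset (composite A), (∀ x ∈ s, Irreducible x) ∧ s.prod = a := by
    intro n
    induction n using Nat.strong_induction_on with
    | _ n ih =>
      intro a hdeg ha hu
      by_cases hirr : Irreducible a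
      · exact ⟨{a}, by simpa using hirr, by simp⟩
      · rw [irreducible_iff] at hirr
        push_neg at hirr
        obtain ⟨b, c, habc, hb, hc⟩ := hirr hu
        have hb0 : b ≠ 0 := by rintro rfl; simp at habc; exact ha habc
        have hc0 : c ≠ 0 := by rintro rfl; simp at habc; exact ha habc
        have hbv : (b : L[X]) ≠ 0 := fun h => hb0 (Subtype.ext h)
        have hcv : (c : L[X]) ≠ 0 := fun h => hc0 (Subtype.ext h)
        have hmul : (a : L[X]) = (b : L[X]) * (c : L[X]) := by
          have := congrArg Subtype.val habc; simpa using this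
        have hdeq : (a : L[X]).natDegree = (b : L[X]).natDegree + (c : L[X]).natDegree := by
          rw [hmul, natDegree_mul hbv hcv]
        have hb1 : 1 ≤ (b : L[X]).natDegree := natDegree_pos_of_nonunit hA hb0 hb
        have hc1 : 1 ≤ (c : L[X]).natDegree := natDegree_pos_of_nonunit hA hc0 hc
        obtain ⟨sb, hsb, hsbp⟩ := ih ((b : L[X]).natDegree) (by omega) b le_rfl hb0 hb
        obtain ⟨sc, hsc, hscp⟩ := ih ((c : L[X]).natDegree) (by omega) c le_rfl hc0 hc
        refine ⟨sb + sc, ?_, ?_⟩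
        · intro x hx
          rcases Multiset.mem_add.mp hx with h | h
          · exact hsb x h
          · exact hsc x h
        · rw [Multiset.prod_add, hsbp, hscp, habc]
  intro a ha hu
  exact key _ a le_rfl ha hu

lemma isField_of_atomic {D : Subring L} (h : IsAtomicDomain (composite D)) : IsField D := by
  have hXmem : (X : L[X]) ∈ composite D := by
    show (X : L[X]).coeff 0 ∈ D
    simpa using D.zero_mem
  set xX : composite D := ⟨X, hXmem⟩ with hxX
  have hX0 : xX ≠ 0 := by
    intro h0
    have : (X : L[X]) = 0 := congrArg Subtype.val h0
    exact X_ne_zero this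
  have hXu : ¬IsUnit xX := by
    intro hu
    obtain ⟨c, hc, -, hC⟩ := unit_char hu
    have : (X : L[X]).coeff 1 = (C c).coeff 1 := by rw [← hC]
    simpa using this
  obtain ⟨s, hs, hprod⟩ := h xX hX0 hXu
  have hprodval : ((s.map (fun q : composite D => (q : L[X]))).prod) = X :=
    calc ((s.map (fun q : composite D => (q : L[X]))).prod)
        = (composite D).subtype s.prod := (map_multiset_prod (composite D).subtype s).symm
      _ = X := by rw [hprod]; rfl
  have hzero : ∃ q ∈ s, (q : L[X]).coeff 0 = 0 := by
    have h0 : ((s.map (fun q : composite D => (q : L[X]).coeff 0)).prod) = 0 := by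
      have := congrArg (fun p : L[X] => constantCoeff p) hprodval
      simp only [map_multiset_prod, Multiset.map_map] at this
      simpa [constantCoeff_apply] using this
    have h0' : (0 : L) ∈ s.map (fun q : composite D => (q : L[X]).coeff 0) :=
      Multiset.prod_eq_zero_iff.mp h0
    obtain ⟨q, hq, hq0⟩ := Multiset.mem_map.mp h0'
    exact ⟨q, hq, hq0⟩
  obtain ⟨q, hqs, hq0⟩ := hzero
  have hqirr : Irreducible q := hs q hqs
  constructor
  · exact exists_pair_ne _
  · exact mul_comm
  · rintro ⟨d, hd⟩ hdne
    have hdne' : d ≠ 0 := fun h => hdne (Subtype.ext h)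
    have hmem1 : (C d : L[X]) ∈ composite D := by simpa [mem_composite] using hd
    have hmem2 : (C d⁻¹ * (q : L[X])) ∈ composite D := by
      show (C d⁻¹ * (q : L[X])).coeff 0 ∈ D
      simp [mul_coeff_zero, hq0]
    have heq : q = ⟨C d, hmem1⟩ * ⟨C d⁻¹ * (q : L[X]), hmem2⟩ := by
      apply Subtype.ext
      show (q : L[X]) = C d * (C d⁻¹ * (q : L[X]))
      rw [← mul_assoc, ← C_mul, mul_inv_cancel₀ hdne', C_1, one_mul]
    rcases hqirr.isUnit_or_isUnit heq with hu | hu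
    · obtain ⟨c, hc, hcinv, hC⟩ := unit_char hu
      have : d = c := by
        have := congrArg (fun p : L[X] => p.coeff 0) hC
        simpa using this
      subst this
      exact ⟨⟨d⁻¹, hcinv⟩, Subtype.ext (mul_inv_cancel₀ hdne')⟩
    · obtain ⟨c, hc, -, hC⟩ := unit_char hu
      exfalso
      apply hc
      have := congrArg (fun p : L[X] => p.coeff 0) hC
      simp [mul_coeff_zero, hq0] at this
      exact this.symm

lemma invMem_of_isField {D : Subring L} (hD : IsField D) : InvMem D := by
  intro a ha hane
  obtain ⟨b, hb⟩ := hD.mul_inv_cancel (a := ⟨a, ha⟩) (fun h => hane (by simpa using congrArg Subtype.val h))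
  have : a * (b : L) = 1 := by simpa using congrArg Subtype.val hb
  have hb' : (b : L) = a⁻¹ := eq_inv_of_mul_eq_one_right this
  rw [← hb']
  exact b.2

end Aux

/-- for fields `K ⊆ L` and `D` a subring of `K`, with `T = K + XL[X]` and
`R = D + XL[X]`, the ring `R` is atomic iff `T` is atomic and `D` is a field. -/
theorem stmt0 {L : Type*} [Field L] (K : Subfield L) (D : Subring L)
    (hDK : ∀ x, x ∈ D → x ∈ K) :
    IsAtomicDomain (composite D) ↔
      IsAtomicDomain (composite K.toSubring) ∧ IsField D := by
  constructor
  · intro hR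
    refine ⟨atomic_of_invMem ?_, isField_of_atomic hR⟩
    intro a ha _
    exact K.inv_mem ha
  · rintro ⟨-, hD⟩
    exact atomic_of_invMem (invMem_of_isField hD)
end

section
/- Let A ⊆ B be integral domains. If the composite A+XB[X] is a Noetherian ring, then A+XB[X] is a bounded factorization domain (BFD). -/
open Polynomial

/-- A bounded factorization domain (BFD): atomic, and for each nonzero nonunit there is a
bound on the number of factors in any factorization into irreducibles. -/
def IsBFD (R : Type*) [CommRing R] : Prop :=
  IsAtomicDomain R ∧
    ∀ a : R, a ≠ 0 → ¬IsUnit a → ∃ N : ℕ, ∀ s : Multiset R,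
      (∀ x ∈ s, Irreducible x) → s.prod = a → Multiset.card s ≤ N

/-- Covering lemma: in a Noetherian ring, for any ideal `I` there is a finite set of primes
covering all "zerodivisors mod `I`". -/
lemma covering {R : Type*} [CommRing R] [IsNoetherianRing R] (I : Ideal R) :
    ∃ S : Finset (Ideal R), (∀ P ∈ S, P.IsPrime) ∧
      ∀ a b : R, b ∉ I → a * b ∈ I → ∃ P ∈ S, a ∈ P := by
  classical
  induction I using IsNoetherian.induction with
  | _ I ih =>
    by_cases hI : I = ⊤
    · exact ⟨∅, by simp, fun a b hb _ => absurd (hI ▸ Submodule.mem_top) hb⟩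
    · haveI : Nontrivial (R ⧸ I) := Ideal.Quotient.nontrivial_iff.mpr hI
      obtain ⟨P, hP, -⟩ :=
        exists_le_isAssociatedPrime_of_isNoetherianRing R (1 : R ⧸ I) one_ne_zero
      obtain ⟨hPprime, y, hy⟩ := isAssociatedPrime_iff.mp hP
      obtain ⟨z, rfl⟩ := Ideal.Quotient.mk_surjective y
      have hmemP : ∀ r : R, r ∈ P ↔ r * z ∈ I := by
        intro r
        rw [hy, Submodule.mem_colon_singleton, Submodule.mem_bot]
        have : r • (Ideal.Quotient.mk I z) = Ideal.Quotient.mk I (r * z) := rfl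
        rw [this, Ideal.Quotient.eq_zero_iff_mem]
      have hz : z ∉ I := by
        intro h
        exact hPprime.ne_top (top_unique fun r _ => (hmemP r).mpr (Ideal.mul_mem_left I r h))
      have hlt : I < I ⊔ Ideal.span {z} :=
        lt_of_le_of_ne le_sup_left fun h =>
          hz (h ▸ Ideal.mem_sup_right (Ideal.subset_span rfl))
      obtain ⟨S', hS'p, hS'⟩ := ih _ hlt
      refine ⟨insert P S', fun Q hQ => ?_, fun a b hb hab => ?_⟩
      · rcases Finset.mem_insert.mp hQ with rfl | hQ
        · exact hPprime
        · exact hS'p Q hQ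
      by_cases hbI' : b ∈ I ⊔ Ideal.span {z}
      · obtain ⟨i, hi, w, hw, rfl⟩ := Submodule.mem_sup.mp hbI'
        obtain ⟨r, rfl⟩ := Ideal.mem_span_singleton.mp hw
        have h1 : a * (z * r) ∈ I := by
          have : a * (i + z * r) - a * i ∈ I := Ideal.sub_mem I hab (Ideal.mul_mem_left I a hi)
          simpa [mul_add] using this
        have h2 : a * r ∈ P := (hmemP _).mpr (by rw [show a * r * z = a * (z * r) by ring]; exact h1)
        have h3 : r ∉ P := by
          intro hr
          exact hb (by
            have := (hmemP r).mp hr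
            exact Ideal.add_mem I hi (by simpa [mul_comm] using this))
        rcases hPprime.mem_or_mem h2 with ha | hr
        · exact ⟨P, Finset.mem_insert_self _ _, ha⟩
        · exact absurd hr h3
      · obtain ⟨Q, hQ, ha⟩ := hS' a b hbI' (le_sup_left (α := Ideal R) hab)
        exact ⟨Q, Finset.mem_insert_of_mem hQ, ha⟩

lemma counting {R : Type*} [CommRing R] (S : Finset (Ideal R)) (s : Multiset R)
    (h : ∀ a ∈ s, ∃ P ∈ S, a ∈ P) :
    ∃ c : Ideal R → ℕ, (∑ P ∈ S, c P) = Multiset.card s ∧ ∀ P ∈ S, s.prod ∈ P ^ c P := by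
  classical
  induction s using Multiset.induction with
  | empty => exact ⟨fun _ => 0, by simp, by simp [Ideal.one_eq_top]⟩
  | cons a s ih =>
    obtain ⟨c, hcsum, hcmem⟩ := ih fun x hx => h x (Multiset.mem_cons_of_mem hx)
    obtain ⟨P0, hP0S, hP0⟩ := h a (Multiset.mem_cons_self a s)
    refine ⟨fun P => if P = P0 then c P + 1 else c P, ?_, fun P hP => ?_⟩
    · have heq : ∀ P ∈ S, (if P = P0 then c P + 1 else c P) = c P + (if P = P0 then 1 else 0) := by
        intro P _; split <;> simp
      rw [Finset.sum_congr rfl heq, Finset.sum_add_distrib, Finset.sum_ite_eq' S P0 fun _ => 1,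
        if_pos hP0S, hcsum, Multiset.card_cons]
    · by_cases hPP0 : P = P0
      · subst hPP0
        simp only [if_pos rfl, pow_succ, Multiset.prod_cons]
        rw [mul_comm]
        exact Ideal.mul_mem_mul (hcmem P hP) hP0
      · simp only [if_neg hPP0, Multiset.prod_cons]
        exact Ideal.mul_mem_left _ _ (hcmem P hP)

theorem noethBFD (R : Type*) [CommRing R] [IsDomain R] [IsNoetherianRing R] : IsBFD R := by
  classical
  constructor
  · intro a ha hu
    obtain ⟨f, hf, u, hfu⟩ := WfDvdMonoid.exists_factors a ha
    have hfne : f ≠ 0 := by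
      rintro rfl
      exact hu (by rw [← hfu]; simpa using u.isUnit)
    obtain ⟨b, hb⟩ := Multiset.exists_mem_of_ne_zero hfne
    refine ⟨(b * u) ::ₘ f.erase b, fun x hx => ?_, ?_⟩
    · rcases Multiset.mem_cons.mp hx with rfl | hx
      · exact (Associated.irreducible ⟨u, rfl⟩ (hf b hb))
      · exact hf x (Multiset.mem_of_mem_erase hx)
    · rw [Multiset.prod_cons, ← hfu, ← Multiset.prod_erase hb]
      ring
  · intro a ha hu
    obtain ⟨S, hSp, hS⟩ := covering (Ideal.span {a})
    have hex : ∀ P ∈ S, ∃ n : ℕ, a ∉ P ^ n := by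
      intro P hP
      by_contra h
      push_neg at h
      have : a ∈ (⊥ : Ideal R) := by
        rw [← Ideal.iInf_pow_eq_bot_of_isDomain (I := P) (hSp P hP).ne_top]
        exact Submodule.mem_iInf _ |>.mpr h
      exact ha (Submodule.mem_bot R |>.mp this)
    set np : Ideal R → ℕ := fun P => if h : ∃ n : ℕ, a ∉ P ^ n then Nat.find h else 0 with hnp
    refine ⟨∑ P ∈ S, np P, fun s hs hsa => ?_⟩
    have hmem : ∀ q ∈ s, ∃ P ∈ S, q ∈ P := by
      intro q hq
      have hprod : q * (s.erase q).prod = a := by rw [Multiset.prod_erase hq, hsa]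
      have hbI : (s.erase q).prod ∉ Ideal.span {a} := by
        intro h
        obtain ⟨c, hc⟩ := Ideal.mem_span_singleton.mp h
        have : a * 1 = a * (q * c) := by
          rw [mul_one]
          calc a = q * (s.erase q).prod := hprod.symm
          _ = q * (a * c) := by rw [hc]
          _ = a * (q * c) := by ring
        have := mul_left_cancel₀ ha this
        exact (hs q hq).not_isUnit (IsUnit.of_mul_eq_one (a := q) c this.symm)
      exact hS q _ hbI (by rw [hprod]; exact Ideal.mem_span_singleton_self a)
    obtain ⟨c, hcsum, hcmem⟩ := counting S s hmem
    rw [← hcsum]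
    refine Finset.sum_le_sum fun P hP => ?_
    have hnpP : np P = Nat.find (hex P hP) := by rw [hnp]; simp only [dif_pos (hex P hP)]
    by_contra hlt
    push_neg at hlt
    have h1 : a ∈ P ^ c P := hsa ▸ hcmem P hP
    have h2 : P ^ c P ≤ P ^ np P := Ideal.pow_le_pow_right (le_of_lt hlt)
    exact (hnpP ▸ Nat.find_spec (hex P hP) : a ∉ P ^ np P) (h2 h1)

/-- if `A ⊆ B` are integral domains and `A + XB[X]` is Noetherian, then
`A + XB[X]` is a BFD. -/
theorem stmt2 {B : Type*} [CommRing B] [IsDomain B] (A : Subring B)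
    (h : IsNoetherianRing (composite A)) :
    IsBFD (composite A) := by
  haveI := h
  exact noethBFD _
end

section
/- Let K ⊆ L be fields, let M be a subfield of K, and set T = K+XL[X] and R = M+XL[X]. Suppose there exists an element of T with zero constant coefficient that is irreducible in T. Then R is an idf-domain if and only if T is an idf-domain and the quotient group K*/M* of the multiplicative group of K by the subgroup of nonzero elements of M is finite. -/
open Polynomial

/-- An idf-domain: every nonzero element has at most finitely many pairwise nonassociate
irreducible divisors. -/
def IsIDFDomain (R : Type*) [CommRing R] : Prop :=
  ∀ a : R, a ≠ 0 → ∃ s : Finset R,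
    ∀ d : R, Irreducible d → d ∣ a → ∃ d' ∈ s, Associated d d'

namespace CompAux

variable {L : Type*} [Field L] (A : Subfield L)

abbrev D := composite A.toSubring

theorem mem_composite (f : Polynomial L) : f ∈ composite A.toSubring ↔ f.coeff 0 ∈ A := Iff.rfl

/-- the element `a·X` of `D A` -/
noncomputable def xMul (a : L) : D A := ⟨C a * X, by simp [mem_composite, A.zero_mem]⟩


theorem coe_mul (f g : D A) : ((f * g : D A) : Polynomial L) = (f : Polynomial L) * (g : Polynomial L) := rfl

@[simp] theorem xMul_coe (a : L) : ((xMul A a : D A) : Polynomial L) = C a * X := rfl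

variable {A}

theorem coe_ne_zero {f : D A} (hf : f ≠ 0) : (f : Polynomial L) ≠ 0 := by
  intro h; exact hf (Subtype.ext h)

theorem isUnit_iff {f : D A} : IsUnit f ↔ ∃ c : L, c ∈ A ∧ c ≠ 0 ∧ (f : Polynomial L) = C c := by
  constructor
  · intro h
    have hu : IsUnit (f : Polynomial L) := h.map (composite A.toSubring).subtype
    obtain ⟨c, hc, hcf⟩ := Polynomial.isUnit_iff.mp hu
    refine ⟨c, ?_, hc.ne_zero, hcf.symm⟩
    have h2 := f.2
    rw [mem_composite, ← hcf] at h2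
    simpa using h2
  · rintro ⟨c, hcA, hc, hfc⟩
    refine IsUnit.of_mul_eq_one (a := f) ⟨C c⁻¹, by simp [mem_composite, A.inv_mem hcA]⟩ ?_
    apply Subtype.ext
    push_cast [hfc]
    rw [← C_mul, mul_inv_cancel₀ hc, C_1]
theorem not_isUnit_of_natDegree_pos {f : D A} (hf : 0 < (f : Polynomial L).natDegree) :
    ¬ IsUnit f := by
  intro h
  obtain ⟨c, _, _, hfc⟩ := isUnit_iff.mp h
  rw [hfc] at hf
  simp at hf

theorem irreducible_xMul {a : L} (ha : a ≠ 0) : Irreducible (xMul A a) := by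
  constructor
  · apply not_isUnit_of_natDegree_pos
    simp [natDegree_C_mul ha]
  · rintro f g hfg
    have hfg' : (f : Polynomial L) * (g : Polynomial L) = C a * X := by
      rw [← coe_mul, ← hfg, xMul_coe]
    have hCa : (C a * X : Polynomial L) ≠ 0 := by
      simp [ha]
    have hf0 : (f : Polynomial L) ≠ 0 := by
      intro h; rw [h, zero_mul] at hfg'; exact hCa hfg'.symm
    have hg0 : (g : Polynomial L) ≠ 0 := by
      intro h; rw [h, mul_zero] at hfg'; exact hCa hfg'.symm
    have hdeg : (f : Polynomial L).natDegree + (g : Polynomial L).natDegree = 1 := by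
      rw [← natDegree_mul hf0 hg0, hfg', natDegree_C_mul ha, natDegree_X]
    have : (f : Polynomial L).natDegree = 0 ∨ (g : Polynomial L).natDegree = 0 := by omega
    rcases this with h0 | h0
    · left
      refine isUnit_iff.mpr ⟨(f : Polynomial L).coeff 0, f.2, ?_, (Polynomial.eq_C_of_natDegree_eq_zero h0)⟩
      intro hc
      rw [Polynomial.eq_C_of_natDegree_eq_zero h0, hc, map_zero] at hf0
      exact hf0 rfl
    · right
      refine isUnit_iff.mpr ⟨(g : Polynomial L).coeff 0, g.2, ?_, (Polynomial.eq_C_of_natDegree_eq_zero h0)⟩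
      intro hc
      rw [Polynomial.eq_C_of_natDegree_eq_zero h0, hc, map_zero] at hg0
      exact hg0 rfl


-- appended inside namespace CompAux
theorem assoc_xMul {a b : L} (ha : a ≠ 0) (hb : b ≠ 0) (hm : a⁻¹ * b ∈ A) :
    Associated (xMul A a) (xMul A b) := by
  have hu : IsUnit (⟨C (a⁻¹ * b), by simp [mem_composite, hm]⟩ : D A) :=
    isUnit_iff.mpr ⟨a⁻¹ * b, hm, by simp [ha, hb], rfl⟩
  obtain ⟨u, hu⟩ := hu
  refine ⟨u, ?_⟩
  apply Subtype.ext
  rw [coe_mul, hu]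
  show (C a * X) * C (a⁻¹ * b) = C b * X
  rw [mul_right_comm, ← C_mul]
  congr 2
  field_simp

theorem xMul_assoc_mem {a b : L} (ha : a ≠ 0) (h : Associated (xMul A a) (xMul A b)) :
    a⁻¹ * b ∈ A := by
  obtain ⟨u, hu⟩ := h
  obtain ⟨c, hcA, hc, hcu⟩ := isUnit_iff.mp u.isUnit
  have h0 : (C a * X) * C c = C b * X := by
    have h2 := congrArg (fun x : D A => (x : Polynomial L)) hu
    simpa [coe_mul, hcu] using h2
  rw [mul_right_comm, ← C_mul] at h0
  have h1 : a * c = b := C_injective (mul_right_cancel₀ X_ne_zero h0)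
  have h3 : a⁻¹ * b = c := by rw [← h1, inv_mul_cancel_left₀ ha]
  rw [h3]; exact hcA

theorem isUnit_poly_of {q : Polynomial L} (hq : q ≠ 0) (h : q.natDegree = 0) : IsUnit q := by
  rw [Polynomial.eq_C_of_natDegree_eq_zero h] at hq ⊢
  exact Polynomial.isUnit_C.mpr (isUnit_iff_ne_zero.mpr (fun hc => hq (by rw [hc, map_zero])))

theorem eq_xMul_of_irred {d : D A} (hd : Irreducible d) (h0 : (d : Polynomial L).coeff 0 = 0) :
    ∃ a : L, a ≠ 0 ∧ (d : Polynomial L) = C a * X := by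
  set p : Polynomial L := (d : Polynomial L) with hp
  have hpne : p ≠ 0 := coe_ne_zero hd.ne_zero
  have hsplit : X * p.divX = p := by
    have := Polynomial.X_mul_divX_add p
    rwa [h0, map_zero, add_zero] at this
  set h : Polynomial L := p.divX with hh
  have hhne : h ≠ 0 := by
    intro hz; rw [hz, mul_zero] at hsplit; exact hpne hsplit.symm
  rcases eq_or_ne (h.coeff 0) 0 with hc | hc
  · exfalso
    have hfact : d = (⟨X, by simp [mem_composite, A.zero_mem]⟩ : D A) * ⟨h, by simp [mem_composite, hc, A.zero_mem]⟩ := by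
      apply Subtype.ext; rw [coe_mul]; exact hsplit.symm
    rcases hd.isUnit_or_isUnit hfact with hu | hu
    · exact not_isUnit_of_natDegree_pos (by simp) hu
    · obtain ⟨c, _, hcne, hch⟩ := isUnit_iff.mp hu
      simp only at hch
      rw [hch] at hc
      simp at hc
      exact hcne hc
  · refine ⟨h.coeff 0, hc, ?_⟩
    have hfact : d = (xMul A (h.coeff 0)) *
        ⟨C (h.coeff 0)⁻¹ * h, by simp [mem_composite, inv_mul_cancel₀ hc, A.one_mem]⟩ := by
      apply Subtype.ext
      rw [coe_mul, xMul_coe]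
      show p = C (h.coeff 0) * X * (C (h.coeff 0)⁻¹ * h)
      have hkey : C (h.coeff 0) * X * (C (h.coeff 0)⁻¹ * h) = X * h := by
        rw [mul_comm (C (h.coeff 0)) X, mul_assoc, ← mul_assoc (C (h.coeff 0)), ← C_mul,
          mul_inv_cancel₀ hc, C_1, one_mul]
      rw [hkey, hsplit]
    rcases hd.isUnit_or_isUnit hfact with hu | hu
    · exact absurd hu (not_isUnit_of_natDegree_pos (by simp [natDegree_C_mul hc]))
    · obtain ⟨e, _, hene, hce⟩ := isUnit_iff.mp hu
      simp only at hce
      have hdegh : h.natDegree = 0 := by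
        have : (C (h.coeff 0)⁻¹ * h).natDegree = 0 := by rw [hce]; simp
        rwa [natDegree_C_mul (inv_ne_zero hc)] at this
      rw [← hsplit, Polynomial.eq_C_of_natDegree_eq_zero hdegh, mul_comm]
      simp

theorem irreducible_coe {d : D A} (hd : Irreducible d)
    (h0 : (d : Polynomial L).coeff 0 ≠ 0) : Irreducible (d : Polynomial L) := by
  have hc0A : (d : Polynomial L).coeff 0 ∈ A := d.2
  constructor
  · intro h
    obtain ⟨c, hc, hcd⟩ := Polynomial.isUnit_iff.mp h
    refine hd.not_isUnit (isUnit_iff.mpr ⟨c, ?_, hc.ne_zero, hcd.symm⟩)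
    rw [← hcd] at hc0A; simpa using hc0A
  · intro q r hqr
    set c : L := (d : Polynomial L).coeff 0 with hcdef
    have hcqr : q.coeff 0 * r.coeff 0 = c := by rw [hcdef, hqr, Polynomial.mul_coeff_zero]
    have hq0 : q.coeff 0 ≠ 0 := fun hz => h0 (by rw [← hcqr, hz, zero_mul])
    have hr0 : r.coeff 0 ≠ 0 := fun hz => h0 (by rw [← hcqr, hz, mul_zero])
    set cq : L := q.coeff 0 with hcq
    have hmem1 : (C (cq⁻¹ * c) * q).coeff 0 ∈ A.toSubring := by
      simp only [coeff_C_mul]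
      have : cq⁻¹ * c * q.coeff 0 = c := by rw [← hcq]; field_simp
      rw [← hcq, this]; exact hc0A
    have hmem2 : (C (cq * c⁻¹) * r).coeff 0 ∈ A.toSubring := by
      simp only [coeff_C_mul]
      have : cq * c⁻¹ * r.coeff 0 = 1 := by
        rw [← hcqr]; field_simp
      rw [this]; exact A.one_mem
    have hfact : d = (⟨C (cq⁻¹ * c) * q, hmem1⟩ : D A) * ⟨C (cq * c⁻¹) * r, hmem2⟩ := by
      apply Subtype.ext
      rw [coe_mul]
      show (d : Polynomial L) = _
      rw [hqr]
      have key : C (cq⁻¹ * c) * q * (C (cq * c⁻¹) * r) = (C (cq⁻¹ * c) * C (cq * c⁻¹)) * (q * r) := by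
        ring
      rw [key, ← C_mul]
      have : cq⁻¹ * c * (cq * c⁻¹) = 1 := by field_simp
      rw [this, C_1, one_mul]
    rcases hd.isUnit_or_isUnit hfact with hu | hu
    · left
      obtain ⟨e, _, hene, hce⟩ := isUnit_iff.mp hu
      simp only at hce
      refine isUnit_poly_of (fun hz => hq0 (by rw [hcq, hz, coeff_zero])) ?_
      have : (C (cq⁻¹ * c) * q).natDegree = 0 := by rw [hce]; simp
      rwa [natDegree_C_mul (mul_ne_zero (inv_ne_zero hq0) h0)] at this
    · right
      obtain ⟨e, _, hene, hce⟩ := isUnit_iff.mp hu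
      simp only at hce
      refine isUnit_poly_of (fun hz => hr0 (by rw [hz, coeff_zero])) ?_
      have : (C (cq * c⁻¹) * r).natDegree = 0 := by rw [hce]; simp
      rwa [natDegree_C_mul (mul_ne_zero hq0 (inv_ne_zero h0))] at this

theorem assoc_of_coe_assoc {d d' : D A} (h : Associated (d : Polynomial L) (d' : Polynomial L))
    (h0 : (d : Polynomial L).coeff 0 ≠ 0) (h0' : (d' : Polynomial L).coeff 0 ≠ 0) :
    Associated d d' := by
  obtain ⟨u, hu⟩ := h
  obtain ⟨l, hl, hlu⟩ := Polynomial.isUnit_iff.mp u.isUnit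
  have hcoeff : (d : Polynomial L).coeff 0 * l = (d' : Polynomial L).coeff 0 := by
    have := congrArg (fun p => Polynomial.coeff p 0) hu
    simpa [← hlu, Polynomial.mul_coeff_zero] using this
  have hlval : l = ((d : Polynomial L).coeff 0)⁻¹ * (d' : Polynomial L).coeff 0 := by
    field_simp [← hcoeff]
    linear_combination hcoeff
  have hlA : l ∈ A := by
    rw [hlval]; exact A.mul_mem (A.inv_mem d.2) d'.2
  have hunit : IsUnit (⟨C l, by simp [mem_composite, hlA]⟩ : D A) :=
    isUnit_iff.mpr ⟨l, hlA, hl.ne_zero, rfl⟩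
  obtain ⟨v, hv⟩ := hunit
  refine ⟨v, ?_⟩
  apply Subtype.ext
  rw [coe_mul, hv]
  show (d : Polynomial L) * C l = (d' : Polynomial L)
  rw [hlu]; exact hu


variable (A) in
def unitsIn : Subgroup Lˣ where
  carrier := {u | (u : L) ∈ A}
  one_mem' := by simpa using A.one_mem
  mul_mem' := fun ha hb => by simpa using A.mul_mem ha hb
  inv_mem' := fun ha => by simpa [Units.val_inv_eq_inv_val] using A.inv_mem ha

theorem mem_unitsIn {u : Lˣ} : u ∈ unitsIn A ↔ (u : L) ∈ A := Iff.rfl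

theorem finite_of_idf (h : IsIDFDomain (D A)) : Finite (Lˣ ⧸ unitsIn A) := by
  classical
  set g : D A := ⟨X ^ 2, by simp [mem_composite, A.zero_mem]⟩ with hgdef
  have hg : g ≠ 0 := by
    intro hz
    have := congrArg Subtype.val hz
    simp only [hgdef] at this
    exact pow_ne_zero 2 (X_ne_zero (R := L)) this
  obtain ⟨s, hs⟩ := h g hg
  have cover : ∀ u : Lˣ, ∃ d' ∈ s, Associated (xMul A (u : L)) d' := by
    intro u
    refine hs _ (irreducible_xMul u.ne_zero) ⟨xMul A ((u⁻¹ : Lˣ) : L), ?_⟩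
    apply Subtype.ext
    rw [coe_mul, xMul_coe, xMul_coe]
    show (X : Polynomial L) ^ 2 = _
    rw [mul_mul_mul_comm, ← C_mul, Units.val_inv_eq_inv_val, mul_inv_cancel₀ u.ne_zero,
      C_1, one_mul, sq]
  choose f hf1 hf2 using cover
  refine Finite.of_injective
    (fun q : Lˣ ⧸ unitsIn A => (⟨f q.out, hf1 q.out⟩ : {x // x ∈ s})) ?_
  intro q1 q2 hq
  have hval : f q1.out = f q2.out := congrArg Subtype.val hq
  have h12 : Associated (xMul A ((q1.out : Lˣ) : L)) (xMul A ((q2.out : Lˣ) : L)) :=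
    (hf2 q1.out).trans (hval ▸ (hf2 q2.out)).symm
  have hmem := xMul_assoc_mem q1.out.ne_zero h12
  rw [← QuotientGroup.out_eq' q1, ← QuotientGroup.out_eq' q2, QuotientGroup.eq]
  show ((q1.out⁻¹ * q2.out : Lˣ) : L) ∈ A
  simpa [Units.val_inv_eq_inv_val] using hmem

theorem idf_of_finite (hfin : Finite (Lˣ ⧸ unitsIn A)) : IsIDFDomain (D A) := by
  classical
  haveI := Fintype.ofFinite (Lˣ ⧸ unitsIn A)
  intro g hg
  have hgL : (g : Polynomial L) ≠ 0 := coe_ne_zero hg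
  let norm : Polynomial L → D A := fun q => ⟨C (q.coeff 0)⁻¹ * q, by
    rcases eq_or_ne (q.coeff 0) 0 with h | h
    · simp [mem_composite, h, A.zero_mem]
    · simp [mem_composite, coeff_C_mul, inv_mul_cancel₀ h, A.one_mem]⟩
  refine ⟨(Finset.univ.image (fun q : Lˣ ⧸ unitsIn A => xMul A ((q.out : Lˣ) : L))) ∪
    ((UniqueFactorizationMonoid.factors (g : Polynomial L)).toFinset.image norm), ?_⟩
  intro d hd hdg
  rcases eq_or_ne ((d : Polynomial L).coeff 0) 0 with h0 | h0
  · obtain ⟨a, ha, hda⟩ := eq_xMul_of_irred hd h0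
    have hdx : d = xMul A a := Subtype.ext (by rw [xMul_coe]; exact hda)
    set u : Lˣ := Units.mk0 a ha with hu
    set q : Lˣ ⧸ unitsIn A := QuotientGroup.mk u with hq
    refine ⟨xMul A ((q.out : Lˣ) : L), ?_, ?_⟩
    · exact Finset.mem_union_left _ (Finset.mem_image.mpr ⟨q, Finset.mem_univ _, rfl⟩)
    · rw [hdx]
      refine assoc_xMul ha q.out.ne_zero ?_
      have hmk : (QuotientGroup.mk u : Lˣ ⧸ unitsIn A) = QuotientGroup.mk q.out := by
        rw [QuotientGroup.out_eq']
      have hmem : u⁻¹ * q.out ∈ unitsIn A := QuotientGroup.eq.mp hmk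
      have : ((u⁻¹ * q.out : Lˣ) : L) ∈ A := hmem
      simpa [Units.val_inv_eq_inv_val, hu] using this
  · have hdL : Irreducible (d : Polynomial L) := irreducible_coe hd h0
    have hdvd : (d : Polynomial L) ∣ (g : Polynomial L) := by
      obtain ⟨h', hh'⟩ := hdg
      exact ⟨(h' : Polynomial L), by rw [← coe_mul, ← hh']⟩
    obtain ⟨qf, hqf_mem, hassoc⟩ :=
      UniqueFactorizationMonoid.exists_mem_factors_of_dvd hgL hdL hdvd
    have hqf0 : qf.coeff 0 ≠ 0 := by
      obtain ⟨w, hw⟩ := hassoc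
      obtain ⟨lw, hlw, hlww⟩ := Polynomial.isUnit_iff.mp w.isUnit
      have hc : (d : Polynomial L).coeff 0 * lw = qf.coeff 0 := by
        rw [← hw, ← hlww, Polynomial.mul_coeff_zero, coeff_C]
        simp
      rw [← hc]
      exact mul_ne_zero h0 hlw.ne_zero
    refine ⟨norm qf, Finset.mem_union_right _
      (Finset.mem_image.mpr ⟨qf, Multiset.mem_toFinset.mpr hqf_mem, rfl⟩), ?_⟩
    have hnorm0 : ((norm qf : D A) : Polynomial L).coeff 0 ≠ 0 := by
      show (C (qf.coeff 0)⁻¹ * qf).coeff 0 ≠ 0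
      rw [coeff_C_mul, inv_mul_cancel₀ hqf0]
      exact one_ne_zero
    refine assoc_of_coe_assoc ?_ h0 hnorm0
    refine hassoc.trans ?_
    show Associated qf (C (qf.coeff 0)⁻¹ * qf)
    have hu : IsUnit (C (qf.coeff 0)⁻¹ : Polynomial L) :=
      Polynomial.isUnit_C.mpr (isUnit_iff_ne_zero.mpr (inv_ne_zero hqf0))
    exact ⟨hu.unit, by rw [IsUnit.unit_spec]; ring⟩

theorem idf_iff : IsIDFDomain (D A) ↔ Finite (Lˣ ⧸ unitsIn A) :=
  ⟨finite_of_idf, idf_of_finite⟩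


section Groups

variable {K M : Subfield L}

theorem mem_rng_iff (hMK : M ≤ K) (u : Kˣ) :
    u ∈ (Units.map (Subfield.inclusion hMK).toMonoidHom).range ↔ ((u : K) : L) ∈ M := by
  constructor
  · rintro ⟨w, rfl⟩
    simp only [Units.coe_map, RingHom.toMonoidHom_eq_coe, MonoidHom.coe_coe]
    exact (w : M).2
  · intro hm
    have hinv : (((u⁻¹ : Kˣ) : K) : L) ∈ M := by
      rw [Units.val_inv_eq_inv_val]
      have : (((u : K)⁻¹ : K) : L) = (((u : K) : L))⁻¹ := map_inv₀ K.subtype _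
      rw [this]
      exact M.inv_mem hm
    refine ⟨⟨⟨((u : K) : L), hm⟩, ⟨(((u⁻¹ : Kˣ) : K) : L), hinv⟩, ?_, ?_⟩, ?_⟩
    · apply Subtype.ext
      show ((u : K) : L) * (((u⁻¹ : Kˣ) : K) : L) = 1
      have h1 : ((u : K) * ((u⁻¹ : Kˣ) : K)) = 1 := u.mul_inv
      calc ((u : K) : L) * (((u⁻¹ : Kˣ) : K) : L)
          = (((u : K) * ((u⁻¹ : Kˣ) : K) : K) : L) := by push_cast; ring
        _ = 1 := by rw [h1]; rfl
    · apply Subtype.ext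
      show (((u⁻¹ : Kˣ) : K) : L) * ((u : K) : L) = 1
      have h1 : (((u⁻¹ : Kˣ) : K) * (u : K)) = 1 := u.inv_mul
      calc (((u⁻¹ : Kˣ) : K) : L) * ((u : K) : L)
          = ((((u⁻¹ : Kˣ) : K) * (u : K) : K) : L) := by push_cast; ring
        _ = 1 := by rw [h1]; rfl
    · apply Units.ext
      apply Subtype.ext
      rfl

/-- The subgroup of `Kˣ` given as the range of `Mˣ`. -/
abbrev rng (hMK : M ≤ K) : Subgroup Kˣ := (Units.map (Subfield.inclusion hMK).toMonoidHom).range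

theorem unitsIn_le (hMK : M ≤ K) : unitsIn M ≤ unitsIn K := fun u hu => hMK hu

theorem finK_of_finM (hMK : M ≤ K) (h : Finite (Lˣ ⧸ unitsIn M)) : Finite (Lˣ ⧸ unitsIn K) := by
  refine Finite.of_surjective
    (QuotientGroup.map (unitsIn M) (unitsIn K) (MonoidHom.id Lˣ) (unitsIn_le hMK)) ?_
  intro x
  obtain ⟨a, rfl⟩ := QuotientGroup.mk_surjective x
  exact ⟨QuotientGroup.mk a, rfl⟩

theorem finQ_of_finM (hMK : M ≤ K) (h : Finite (Lˣ ⧸ unitsIn M)) : Finite (Kˣ ⧸ rng hMK) := by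
  classical
  let φ : Kˣ →* Lˣ ⧸ unitsIn M :=
    (QuotientGroup.mk' (unitsIn M)).comp (Units.map (K.subtype : K →+* L).toMonoidHom)
  have hker : φ.ker = rng hMK := by
    ext u
    rw [MonoidHom.mem_ker, mem_rng_iff hMK u]
    show (QuotientGroup.mk _ : Lˣ ⧸ unitsIn M) = 1 ↔ _
    rw [QuotientGroup.eq_one_iff]
    rfl
  have hfin : Finite (Kˣ ⧸ φ.ker) :=
    Finite.of_injective (QuotientGroup.kerLift φ) (QuotientGroup.kerLift_injective φ)
  rw [hker] at hfin
  exact hfin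

/-- build the element of `Kˣ` from a unit of `L` whose value lies in `K` -/
noncomputable def toK (w : Lˣ) (hw : (w : L) ∈ K) : Kˣ :=
  Units.mk0 (⟨(w : L), hw⟩ : K) (by
    intro hz
    exact w.ne_zero (congrArg (fun x : K => (x : L)) hz))

theorem toK_val (w : Lˣ) (hw : (w : L) ∈ K) : ((toK w hw : K) : L) = (w : L) := rfl

theorem finM_of_finK_finQ (hMK : M ≤ K) (h1 : Finite (Lˣ ⧸ unitsIn K)) (h2 : Finite (Kˣ ⧸ rng hMK)) :
    Finite (Lˣ ⧸ unitsIn M) := by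
  classical
  let π : Lˣ ⧸ unitsIn M → Lˣ ⧸ unitsIn K :=
    QuotientGroup.map (unitsIn M) (unitsIn K) (MonoidHom.id Lˣ) (unitsIn_le hMK)
  have hπ : ∀ a : Lˣ, π (QuotientGroup.mk a) = QuotientGroup.mk a := fun a => by
    show QuotientGroup.map _ _ _ _ _ = _
    exact QuotientGroup.map_mk (unitsIn M) (unitsIn K) (MonoidHom.id Lˣ) (unitsIn_le hMK) a
  have hKmem : ∀ x : Lˣ ⧸ unitsIn M, (((π x).out⁻¹ * x.out : Lˣ) : L) ∈ K := by
    intro x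
    have : (QuotientGroup.mk (π x).out : Lˣ ⧸ unitsIn K) = QuotientGroup.mk x.out := by
      rw [QuotientGroup.out_eq']
      conv_lhs => rw [← QuotientGroup.out_eq' x]
      exact hπ _
    exact QuotientGroup.eq.mp this
  let χ : Lˣ ⧸ unitsIn M → Kˣ ⧸ rng hMK :=
    fun x => QuotientGroup.mk (toK _ (hKmem x))
  refine Finite.of_injective (fun x => (π x, χ x)) ?_
  intro x y hxy
  have hπxy : π x = π y := congrArg Prod.fst hxy
  have hχxy : χ x = χ y := congrArg Prod.snd hxy
  have key := QuotientGroup.eq.mp hχxy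
  rw [mem_rng_iff hMK] at key
  have hmem : ((x.out⁻¹ * y.out : Lˣ) : L) ∈ M := by
    have e1 : ((((toK _ (hKmem x))⁻¹ * (toK _ (hKmem y)) : Kˣ) : K) : L)
        = ((((π x).out⁻¹ * x.out : Lˣ) : L))⁻¹ * (((π y).out⁻¹ * y.out : Lˣ) : L) := by
      rw [Units.val_mul, Units.val_inv_eq_inv_val]
      push_cast
      rw [toK_val, toK_val]
      simp [Units.val_mul, Units.val_inv_eq_inv_val]
    rw [e1, ← hπxy] at key
    have e2 : ((((π x).out⁻¹ * x.out : Lˣ) : L))⁻¹ * (((π x).out⁻¹ * y.out : Lˣ) : L)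
        = ((x.out⁻¹ * y.out : Lˣ) : L) := by
      rw [← Units.val_inv_eq_inv_val, ← Units.val_mul]
      congr 1
      group
    rwa [e2] at key
  have hfin : (QuotientGroup.mk x.out : Lˣ ⧸ unitsIn M) = QuotientGroup.mk y.out :=
    QuotientGroup.eq.mpr hmem
  rwa [QuotientGroup.out_eq', QuotientGroup.out_eq'] at hfin

end Groups

end CompAux

/-- let `M ⊆ K ⊆ L` be fields, `T = K + XL[X]`, `R = M + XL[X]`. If some
element of `T` with zero constant coefficient is irreducible in `T`, then `R` is an
idf-domain iff `T` is an idf-domain and the group `K⋆/M⋆` is finite. -/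
theorem stmt6 {L : Type*} [Field L] (K M : Subfield L) (hMK : M ≤ K)
    (h : ∃ f : composite K.toSubring, (f : Polynomial L).coeff 0 = 0 ∧ Irreducible f) :
    IsIDFDomain (composite M.toSubring) ↔
      IsIDFDomain (composite K.toSubring) ∧
        Finite (Kˣ ⧸ (Units.map (Subfield.inclusion hMK).toMonoidHom).range) := by
  rw [CompAux.idf_iff (A := M), CompAux.idf_iff (A := K)]
  constructor
  · intro hM
    exact ⟨CompAux.finK_of_finM hMK hM, CompAux.finQ_of_finM hMK hM⟩
  · rintro ⟨hK, hQ⟩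
    exact CompAux.finM_of_finK_finQ hMK hK hQ
end

section
/- Let D be an integral domain and let S be a multiplicatively closed subset of D consisting of nonzero elements, with the property that whenever a prime ideal P of D meets S, every nonzero prime ideal Q contained in P also meets S. Then R = D+XD_S[X] is a Hilbert (Jacobson) ring if and only if both D and D_S are Hilbert (Jacobson) rings. -/
open Polynomial

/-- A Hilbert (Jacobson) ring: every prime ideal is an intersection of maximal ideals. -/
def IsHilbertRing (R : Type*) [CommRing R] : Prop :=
  ∀ P : Ideal R, P.IsPrime →
    ∃ 𝒮 : Set (Ideal R), (∀ M ∈ 𝒮, M.IsMaximal) ∧ P = sInf 𝒮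

namespace Stmt12Aux

theorem isHilbertRing_iff_jac {R : Type*} [CommRing R] :
    IsHilbertRing R ↔ ∀ P : Ideal R, P.IsPrime → P.jacobson = P := by
  constructor
  · intro h P hP
    obtain ⟨𝒮, hmax, hPS⟩ := h P hP
    refine le_antisymm ?_ Ideal.le_jacobson
    rw [Ideal.jacobson]
    calc sInf {J : Ideal R | P ≤ J ∧ J.IsMaximal} ≤ sInf 𝒮 := by
          refine sInf_le_sInf ?_
          intro M hM
          exact ⟨hPS ▸ sInf_le hM, hmax M hM⟩
      _ = P := hPS.symm
  · intro h P hP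
    exact ⟨{J : Ideal R | P ≤ J ∧ J.IsMaximal}, fun M hM => hM.2, (h P hP).symm⟩

theorem mem_jacobson_iff' {R : Type*} [CommRing R] {I : Ideal R} {x : R} :
    x ∈ I.jacobson ↔ ∀ J : Ideal R, I ≤ J → J.IsMaximal → x ∈ J := by
  rw [Ideal.jacobson, Ideal.mem_sInf]
  exact ⟨fun h J h1 h2 => h ⟨h1, h2⟩, fun h J hJ => h J hJ.1 hJ.2⟩

section Sat

variable {B : Type*} [CommRing B] (A : Subring B)

theorem X_mul_mem (t : B[X]) : X * t ∈ composite A := by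
  show (X * t).coeff 0 ∈ A
  simp only [Polynomial.mul_coeff_zero, Polynomial.coeff_X_zero, zero_mul]
  exact A.zero_mem

/-- The polynomial `X` as an element of the composite ring. -/
noncomputable def Xelt : (composite A) :=
  ⟨X, by show (X : B[X]).coeff 0 ∈ A; simp only [Polynomial.coeff_X_zero]; exact A.zero_mem⟩

theorem Xelt_val : ((Xelt A : (composite A)) : B[X]) = X := rfl

/-- The element `X^(n+1) * t` of the composite ring. -/
noncomputable def XnElt (n : ℕ) (t : B[X]) : (composite A) :=
  ⟨X ^ (n + 1) * t, by rw [pow_succ', mul_assoc]; exact X_mul_mem A (X ^ n * t)⟩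

theorem XnElt_val (n : ℕ) (t : B[X]) : (XnElt A n t : B[X]) = X ^ (n + 1) * t := rfl

theorem Xelt_pow_val (n : ℕ) : ((Xelt A ^ n : (composite A)) : B[X]) = X ^ n := by
  rw [SubmonoidClass.coe_pow]; rfl

variable {A}

theorem XnElt_succ (n : ℕ) (t : B[X]) :
    XnElt A (n + 1) t = Xelt A * XnElt A n t := by
  apply Subtype.ext
  show X ^ (n + 1 + 1) * t = X * (X ^ (n + 1) * t)
  rw [pow_succ', mul_assoc]

theorem XnElt_mono {M : Ideal (composite A)} {n : ℕ} {t : B[X]}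
    (h : XnElt A n t ∈ M) (m : ℕ) : XnElt A (n + m) t ∈ M := by
  induction m with
  | zero => exact h
  | succ k ih => rw [show n + (k+1) = (n+k) + 1 by ring, XnElt_succ]; exact M.mul_mem_left _ ih

variable (A) in
/-- The `X`-saturation of an ideal of the composite ring, as an ideal of `B[X]`. -/
def satIdeal (M : Ideal (composite A)) : Ideal B[X] where
  carrier := {t | ∃ n, XnElt A n t ∈ M}
  zero_mem' := ⟨0, by have : XnElt A 0 (0 : B[X]) = 0 := Subtype.ext (by simp [XnElt_val]); rw [this]; exact M.zero_mem⟩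
  add_mem' := by
    rintro t t' ⟨n, hn⟩ ⟨n', hn'⟩
    refine ⟨n + n', ?_⟩
    have h1 : XnElt A (n + n') t ∈ M := XnElt_mono hn n'
    have h2 : XnElt A (n + n') t' ∈ M := by rw [Nat.add_comm n n']; exact XnElt_mono hn' n
    have : XnElt A (n + n') (t + t') = XnElt A (n + n') t + XnElt A (n + n') t' :=
      Subtype.ext (by simp [XnElt_val, mul_add])
    rw [this]; exact M.add_mem h1 h2
  smul_mem' := by
    rintro c t ⟨n, hn⟩
    refine ⟨n + 1, ?_⟩
    have : XnElt A (n + 1) (c • t) = XnElt A n t * ⟨X * c, X_mul_mem A c⟩ := by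
      apply Subtype.ext
      show X ^ (n + 1 + 1) * (c * t) = X ^ (n + 1) * t * (X * c)
      ring
    rw [this]; exact M.mul_mem_right _ hn

theorem mem_satIdeal {M : Ideal (composite A)} {t : B[X]} :
    t ∈ satIdeal A M ↔ ∃ n, XnElt A n t ∈ M := Iff.rfl

theorem XnElt_eq_pow_mul (n : ℕ) (r : (composite A)) :
    XnElt A n ((composite A).subtype r) = (Xelt A) ^ (n + 1) * r := by
  apply Subtype.ext
  show X ^ (n + 1) * (r : B[X]) = ((Xelt A ^ (n+1) : (composite A)) : B[X]) * (r : B[X])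
  rw [Xelt_pow_val]

theorem comap_satIdeal {M : Ideal (composite A)} (hM : M.IsPrime) (hX : Xelt A ∉ M) :
    (satIdeal A M).comap (composite A).subtype = M := by
  ext r
  simp only [Ideal.mem_comap]
  constructor
  · rintro ⟨n, hn⟩
    rw [XnElt_eq_pow_mul] at hn
    rcases hM.mem_or_mem hn with h | h
    · exact absurd (hM.mem_of_pow_mem _ h) hX
    · exact h
  · intro hr
    exact ⟨0, by rw [XnElt_eq_pow_mul]; exact M.mul_mem_left _ hr⟩

theorem satIdeal_isPrime {M : Ideal (composite A)} (hM : M.IsPrime) (hX : Xelt A ∉ M) :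
    (satIdeal A M).IsPrime := by
  constructor
  · intro h
    rw [Ideal.eq_top_iff_one] at h
    obtain ⟨n, hn⟩ := h
    have : XnElt A n (1 : B[X]) = (Xelt A) ^ (n + 1) := by
      apply Subtype.ext
      show X ^ (n+1) * 1 = ((Xelt A ^ (n+1) : (composite A)) : B[X])
      rw [mul_one, Xelt_pow_val]
    rw [this] at hn
    exact hX (hM.mem_of_pow_mem _ hn)
  · rintro t t' ⟨n, hn⟩
    have key : XnElt A n t * XnElt A n t' = (Xelt A) ^ (n + 1) * XnElt A n (t * t') := by
      apply Subtype.ext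
      show (X ^ (n+1) * t) * (X ^ (n+1) * t') =
        ((Xelt A ^ (n+1) : (composite A)) : B[X]) * (X ^ (n+1) * (t * t'))
      rw [Xelt_pow_val]
      ring
    have : XnElt A n t * XnElt A n t' ∈ M := by
      rw [key]; exact M.mul_mem_left _ hn
    rcases hM.mem_or_mem this with h | h
    · exact Or.inl ⟨n, h⟩
    · exact Or.inr ⟨n, h⟩

theorem X_not_mem_satIdeal {M : Ideal (composite A)} (hM : M.IsPrime) (hX : Xelt A ∉ M) :
    X ∉ satIdeal A M := by
  rintro ⟨n, hn⟩
  have : XnElt A n (X : B[X]) = (Xelt A) ^ (n + 2) := by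
    apply Subtype.ext
    show X ^ (n+1) * X = ((Xelt A ^ (n+2) : (composite A)) : B[X])
    rw [Xelt_pow_val]
    ring
  rw [this] at hn
  exact hX (hM.mem_of_pow_mem _ hn)

theorem le_satIdeal {M : Ideal (composite A)} {I₂ : Ideal B[X]}
    (h : I₂.comap (composite A).subtype ≤ M) : I₂ ≤ satIdeal A M := by
  intro t ht
  refine ⟨0, h ?_⟩
  show X ^ (0+1) * t ∈ I₂
  rw [pow_one]
  exact I₂.mul_mem_left _ ht

theorem satIdeal_isMaximal {M : Ideal (composite A)} (hM : M.IsMaximal) (hX : Xelt A ∉ M) :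
    (satIdeal A M).IsMaximal := by
  have hMp : M.IsPrime := hM.isPrime
  rw [Ideal.isMaximal_iff]
  constructor
  · intro h
    obtain ⟨n, hn⟩ := (mem_satIdeal).1 h
    have : XnElt A n (1 : B[X]) = (Xelt A) ^ (n + 1) := by
      apply Subtype.ext
      show X ^ (n+1) * 1 = ((Xelt A ^ (n+1) : (composite A)) : B[X])
      rw [mul_one, Xelt_pow_val]
    rw [this] at hn
    exact hX (hMp.mem_of_pow_mem _ hn)
  · intro J x hle hxnot hxJ
    have hr : (⟨X * x, X_mul_mem A x⟩ : (composite A)) ∉ M := by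
      intro h
      exact hxnot ⟨0, by
        have : XnElt A 0 x = ⟨X * x, X_mul_mem A x⟩ := Subtype.ext (by simp [XnElt_val])
        rw [this]; exact h⟩
    have hMle : M ≤ J.comap (composite A).subtype := by
      conv_lhs => rw [← comap_satIdeal hMp hX]
      exact Ideal.comap_mono hle
    have hrJ : (⟨X * x, X_mul_mem A x⟩ : (composite A)) ∈ J.comap (composite A).subtype :=
      J.mul_mem_left _ hxJ
    exact (Ideal.isMaximal_iff.1 hM).2 (J.comap (composite A).subtype) _ hMle hr hrJ

theorem comap_isMaximal_of_X_not_mem {M₂ : Ideal B[X]} (hM₂ : M₂.IsMaximal) (hX : X ∉ M₂) :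
    (M₂.comap (composite A).subtype).IsMaximal := by
  letI : Field (B[X] ⧸ M₂) := Ideal.Quotient.field M₂
  set φ : (composite A) →+* B[X] ⧸ M₂ :=
    (Ideal.Quotient.mk M₂).comp (composite A).subtype with hφ
  have hsurj : Function.Surjective φ := by
    intro y
    have hXne : (Ideal.Quotient.mk M₂ X) ≠ 0 := by
      rw [Ne, Ideal.Quotient.eq_zero_iff_mem]; exact hX
    obtain ⟨t', ht'⟩ := Ideal.Quotient.mk_surjective (y * (Ideal.Quotient.mk M₂ X)⁻¹)
    refine ⟨⟨X * t', X_mul_mem A t'⟩, ?_⟩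
    show (Ideal.Quotient.mk M₂) (X * t') = y
    rw [map_mul, ht', mul_comm, mul_assoc, inv_mul_cancel₀ hXne, mul_one]
  have hker : RingHom.ker φ = M₂.comap (composite A).subtype := by
    ext r
    simp only [hφ, RingHom.mem_ker, RingHom.comp_apply, Ideal.mem_comap,
      Ideal.Quotient.eq_zero_iff_mem]
  rw [← hker]
  exact RingHom.ker_isMaximal_of_surjective φ hsurj

end Sat

section Goldman

variable {A : Type*} [CommRing A]

theorem pseudoDiv [Nontrivial A] (w : A[X]) (hn : 1 ≤ w.natDegree) :
    ∀ t : A[X], ∃ (k : ℕ) (q r : A[X]),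
      C w.leadingCoeff ^ k * t = q * w + r ∧ (r = 0 ∨ r.natDegree < w.natDegree) := by
  suffices H : ∀ (m : ℕ) (t : A[X]), t.natDegree ≤ m → ∃ (k : ℕ) (q r : A[X]),
      C w.leadingCoeff ^ k * t = q * w + r ∧ (r = 0 ∨ r.natDegree < w.natDegree) by
    exact fun t => H t.natDegree t le_rfl
  intro m
  induction m with
  | zero =>
    intro t ht
    exact ⟨0, 0, t, by simp, Or.inr (lt_of_le_of_lt (Nat.le_zero.1 ht ▸ le_rfl) hn)⟩
  | succ m IH =>
    intro t ht
    by_cases hlt : t.natDegree < w.natDegree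
    · exact ⟨0, 0, t, by simp, Or.inr hlt⟩
    push_neg at hlt
    have h1 : t.natDegree = w.natDegree + (t.natDegree - w.natDegree) := by omega
    -- the reduced polynomial
    set t' : A[X] := C w.leadingCoeff * t -
      C t.leadingCoeff * (X ^ (t.natDegree - w.natDegree) * w) with ht'def
    have hc : t'.coeff t.natDegree = 0 := by
      rw [ht'def, Polynomial.coeff_sub, Polynomial.coeff_C_mul, Polynomial.coeff_C_mul]
      have h2 : (X ^ (t.natDegree - w.natDegree) * w).coeff t.natDegree = w.coeff w.natDegree := by
        have h3 := Polynomial.coeff_X_pow_mul w (t.natDegree - w.natDegree) w.natDegree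
        rwa [show w.natDegree + (t.natDegree - w.natDegree) = t.natDegree by omega] at h3
      rw [h2]
      simp only [Polynomial.leadingCoeff]
      ring
    have hdb : t'.natDegree ≤ t.natDegree := by
      rw [ht'def]
      refine le_trans (Polynomial.natDegree_sub_le _ _) (max_le ?_ ?_)
      · exact Polynomial.natDegree_C_mul_le _ _
      · refine le_trans (Polynomial.natDegree_C_mul_le _ _) ?_
        refine le_trans (Polynomial.natDegree_mul_le) ?_
        have := Polynomial.natDegree_X_pow (R := A) (t.natDegree - w.natDegree)
        omega
    by_cases ht'0 : t' = 0
    · refine ⟨1, C t.leadingCoeff * X ^ (t.natDegree - w.natDegree), 0, ?_, Or.inl rfl⟩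
      have : t' = 0 := ht'0
      rw [ht'def] at this
      rw [pow_one]
      linear_combination this
    · have hlt2 : t'.natDegree < t.natDegree := by
        rcases lt_or_eq_of_le hdb with h | h
        · exact h
        · exfalso
          apply ht'0
          rw [← Polynomial.leadingCoeff_eq_zero, Polynomial.leadingCoeff, h, hc]
      obtain ⟨k, q, r, heq, hr⟩ := IH t' (by omega)
      rw [ht'def] at heq
      refine ⟨k + 1, q + C w.leadingCoeff ^ k * C t.leadingCoeff *
        X ^ (t.natDegree - w.natDegree), r, ?_, hr⟩
      linear_combination heq

theorem goldman [IsDomain A] {M₂ : Ideal A[X]}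
    (hmax : M₂.IsMaximal) (hcomap : ∀ x : A, C x ∈ M₂ → x = 0) :
    ∃ a : A, a ≠ 0 ∧ ∀ 𝔭 : Ideal A, 𝔭.IsPrime → 𝔭 ≠ ⊥ → a ∈ 𝔭 := by
  -- M₂ contains a nonzero element
  have hex : ∃ w, w ∈ M₂ ∧ w ≠ 0 ∧ w.natDegree ∈ {d : ℕ | ∃ v ∈ M₂, v ≠ 0 ∧ v.natDegree = d} := by
    have h0 : ∃ w ∈ M₂, w ≠ 0 := by
      by_contra h
      push_neg at h
      have hbot : M₂ = ⊥ := by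
        apply le_antisymm _ bot_le
        intro x hx
        simp [h x hx]
      have hXunit : IsUnit (X : A[X]) := by
        have hb : (⊥ : Ideal A[X]).IsMaximal := hbot ▸ hmax
        rcases eq_or_ne (Ideal.span {(X : A[X])}) ⊤ with hT | hT
        · exact Ideal.span_singleton_eq_top.1 hT
        · exfalso
          have heq : (⊥ : Ideal A[X]) = Ideal.span {(X : A[X])} := hb.eq_of_le hT bot_le
          have hmem : (X : A[X]) ∈ (⊥ : Ideal A[X]) := heq ▸ Ideal.mem_span_singleton_self _
          exact Polynomial.X_ne_zero ((Ideal.mem_bot).1 hmem)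
      exact Polynomial.not_isUnit_X hXunit
    obtain ⟨w, hw1, hw2⟩ := h0
    exact ⟨w, hw1, hw2, ⟨w, hw1, hw2, rfl⟩⟩
  set s : Set ℕ := {d : ℕ | ∃ v ∈ M₂, v ≠ 0 ∧ v.natDegree = d} with hs
  have hsne : s.Nonempty := by obtain ⟨w, _, _, h⟩ := hex; exact ⟨_, h⟩
  obtain ⟨w, hwM, hw0, hwd⟩ := Nat.sInf_mem hsne
  have hminimal : ∀ r ∈ M₂, r ≠ 0 → ¬ r.natDegree < w.natDegree := by
    intro r hrM hr0 hlt
    have : r.natDegree ∈ s := ⟨r, hrM, hr0, rfl⟩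
    have := Nat.sInf_le this
    omega
  have ha0 : w.leadingCoeff ≠ 0 := by
    rw [Ne, Polynomial.leadingCoeff_eq_zero]; exact hw0
  have hn : 1 ≤ w.natDegree := by
    by_contra h
    push_neg at h
    interval_cases hd : w.natDegree
    · have : w = C (w.coeff 0) := Polynomial.eq_C_of_natDegree_eq_zero hd
      have h2 : C (w.coeff 0) ∈ M₂ := this ▸ hwM
      have := hcomap _ h2
      apply hw0
      rw [‹w = C (w.coeff 0)›, this, map_zero]
  refine ⟨w.leadingCoeff, ha0, ?_⟩
  intro 𝔭 h𝔭 h𝔭0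
  by_contra haa
  obtain ⟨⟨b, hb𝔭⟩, hbne⟩ := Submodule.nonzero_mem_of_bot_lt (bot_lt_iff_ne_bot.2 h𝔭0)
  have hb0 : b ≠ 0 := by simpa [Submodule.coe_eq_zero] using hbne
  have hCb : C b ∉ M₂ := fun h => hb0 (hcomap b h)
  obtain ⟨z, i, hiM, hzi⟩ := hmax.exists_inv hCb
  -- i = 1 - z * C b ∈ M₂
  obtain ⟨k, q, r, heq, hr⟩ := pseudoDiv w hn i
  have hrM : r ∈ M₂ := by
    have : r = C w.leadingCoeff ^ k * i - q * w := by linear_combination -heq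
    rw [this]
    exact Ideal.sub_mem _ (M₂.mul_mem_left _ hiM) (M₂.mul_mem_left _ hwM)
  have hrz : r = 0 := by
    rcases hr with h | h
    · exact h
    · by_contra hr0
      exact hminimal r hrM hr0 h
  rw [hrz, add_zero] at heq
  -- map to (A ⧸ 𝔭)[X]
  letI : IsDomain (A ⧸ 𝔭) := Ideal.Quotient.isDomain 𝔭
  set π := Ideal.Quotient.mk 𝔭 with hπ
  have hmapeq : Polynomial.map π (C w.leadingCoeff ^ k * i) = Polynomial.map π (q * w) := by
    rw [heq]
  have hib : i = 1 - z * C b := by linear_combination hzi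
  rw [hib] at hmapeq
  have hbzero : π b = 0 := Ideal.Quotient.eq_zero_iff_mem.2 hb𝔭
  have hlead : π w.leadingCoeff ≠ 0 := fun h => haa (Ideal.Quotient.eq_zero_iff_mem.1 h)
  have hLHS : Polynomial.map π (C w.leadingCoeff ^ k * (1 - z * C b)) =
      C (π w.leadingCoeff) ^ k := by
    rw [Polynomial.map_mul, Polynomial.map_pow, Polynomial.map_C, Polynomial.map_sub,
      Polynomial.map_one, Polynomial.map_mul, Polynomial.map_C, hbzero]
    simp
  rw [hLHS, Polynomial.map_mul] at hmapeq
  have hwmap0 : Polynomial.map π w ≠ 0 := by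
    intro h
    apply hlead
    have := congrArg (fun p => Polynomial.coeff p w.natDegree) h
    simpa [Polynomial.coeff_map] using this
  have hqmap0 : Polynomial.map π q ≠ 0 := by
    intro h
    rw [h, zero_mul, ← Polynomial.C_pow, Polynomial.C_eq_zero] at hmapeq
    exact hlead (pow_eq_zero_iff'.mp hmapeq).1
  have hdegw : (Polynomial.map π w).natDegree = w.natDegree :=
    Polynomial.natDegree_map_of_leadingCoeff_ne_zero π hlead
  have hdeg := Polynomial.natDegree_mul hqmap0 hwmap0
  rw [← hmapeq] at hdeg
  rw [← Polynomial.C_pow, Polynomial.natDegree_C] at hdeg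
  omega

end Goldman

section Main

variable {D : Type*} [CommRing D] [IsDomain D] {S : Submonoid D}
variable {L : Type*} [CommRing L] [IsDomain L] [Algebra D L] [IsLocalization S L]

theorem comap_bot_of_bot (hle : S ≤ nonZeroDivisors D) {m : Ideal L}
    (h : m.comap (algebraMap D L) = ⊥) : m = ⊥ := by
  apply le_antisymm _ bot_le
  intro x hx
  obtain ⟨⟨d, s⟩, hds⟩ := IsLocalization.surj S x
  have hdm : algebraMap D L d ∈ m := hds ▸ m.mul_mem_right _ hx
  have hd : d ∈ m.comap (algebraMap D L) := hdm
  rw [h, Ideal.mem_bot] at hd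
  subst hd
  rw [map_zero] at hds
  have hu : IsUnit (algebraMap D L s) := IsLocalization.map_units L s
  obtain ⟨c, hc⟩ := hu.exists_right_inv
  have : x = x * (algebraMap D L s * c) := by rw [hc, mul_one]
  rw [Ideal.mem_bot, this, ← mul_assoc, hds, zero_mul]

theorem X_pow_not_mem_span {a : L} (ha : a ≠ 0) (n : ℕ) :
    (X : L[X]) ^ n ∉ Ideal.span {X ^ 2 - C a} := by
  suffices H : ∀ (n : ℕ) (h : L[X]), (X : L[X]) ^ n ≠ (X ^ 2 - C a) * h by
    intro hmem
    obtain ⟨h, hh⟩ := Ideal.mem_span_singleton.1 hmem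
    exact H n h hh
  intro n
  induction n with
  | zero =>
    intro h heq
    have hne : (X ^ 2 - C a : L[X]) ≠ 0 := Polynomial.X_pow_sub_C_ne_zero (by norm_num) a
    have hh : h ≠ 0 := by
      intro h0; rw [h0, mul_zero] at heq; exact one_ne_zero (pow_zero (X : L[X]) ▸ heq)
    have := Polynomial.natDegree_mul hne hh
    rw [← heq] at this
    rw [Polynomial.natDegree_X_pow_sub_C] at this
    simp only [pow_zero, Polynomial.natDegree_one] at this
    omega
  | succ n ih =>
    intro h heq
    have hc0 : h.coeff 0 = 0 := by
      have h2 := congrArg (fun p => Polynomial.coeff p 0) heq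
      simp only [Polynomial.coeff_X_pow, Polynomial.mul_coeff_zero, Polynomial.coeff_sub,
        Polynomial.coeff_C_zero] at h2
      rw [if_neg (by omega : ¬ 0 = n + 1), if_neg (by norm_num : ¬ 0 = 2)] at h2
      have h3 : a * h.coeff 0 = 0 := by linear_combination h2
      rcases mul_eq_zero.1 h3 with h4 | h4
      · exact absurd h4 ha
      · exact h4
    obtain ⟨h', rfl⟩ := Polynomial.X_dvd_iff.2 hc0
    apply ih h'
    have hX : (X : L[X]) ≠ 0 := Polynomial.X_ne_zero
    apply mul_left_cancel₀ hX
    calc X * X ^ n = X ^ (n + 1) := by ring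
      _ = (X ^ 2 - C a) * (X * h') := heq
      _ = X * ((X ^ 2 - C a) * h') := by ring

theorem decomp_mod_sq (a : L) (t : L[X]) :
    ∃ (c d : L) (h : L[X]), t = C c + C d * X + (X ^ 2 - C a) * h := by
  induction t using Polynomial.induction_on with
  | C u => exact ⟨u, 0, 0, by simp⟩
  | add p q hp hq =>
    obtain ⟨cp, dp, hp', hhp⟩ := hp
    obtain ⟨cq, dq, hq', hhq⟩ := hq
    exact ⟨cp + cq, dp + dq, hp' + hq', by rw [hhp, hhq, Polynomial.C_add, Polynomial.C_add]; ring⟩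
  | monomial n u ih =>
    obtain ⟨c, d, h, hch⟩ := ih
    refine ⟨d * a, c, h * X + C d, ?_⟩
    rw [Polynomial.C_mul]
    have : (C u : L[X]) * X ^ (n + 1) = X * (C u * X ^ n) := by ring
    rw [this, hch]
    ring


variable (L) in
/-- The constant `d` as an element of the composite ring. -/
noncomputable def Celt (d : D) : ↥(composite ((algebraMap D L).range)) :=
  ⟨C (algebraMap D L d), by
    show (C (algebraMap D L d)).coeff 0 ∈ (algebraMap D L).range
    rw [Polynomial.coeff_C_zero]; exact ⟨d, rfl⟩⟩

variable (S L) in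
/-- The projection of the composite ring onto `D`. -/
noncomputable def piHom (hle : S ≤ nonZeroDivisors D) :
    ↥(composite ((algebraMap D L).range)) →+* D :=
  (RingEquiv.ofBijective ((algebraMap D L).rangeRestrict)
      ⟨fun a b h => IsLocalization.injective L hle (congrArg Subtype.val h),
        (algebraMap D L).rangeRestrict_surjective⟩).symm.toRingHom.comp
    (RingHom.codRestrict
      ((Polynomial.constantCoeff (R := L)).comp (composite ((algebraMap D L).range)).subtype)
      ((algebraMap D L).range) (fun r => r.2))

theorem algebraMap_piHom (hle : S ≤ nonZeroDivisors D)
    (r : ↥(composite ((algebraMap D L).range))) :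
    algebraMap D L (piHom S L hle r) = (r : L[X]).coeff 0 := by
  set e := RingEquiv.ofBijective ((algebraMap D L).rangeRestrict)
      ⟨fun a b h => IsLocalization.injective L hle (congrArg Subtype.val h),
        (algebraMap D L).rangeRestrict_surjective⟩ with he
  set y : ((algebraMap D L).range) := ⟨(r : L[X]).coeff 0, r.2⟩ with hy
  have h1 : ∀ x : D, ((e x : (algebraMap D L).range) : L) = algebraMap D L x := fun _ => rfl
  have h2 : piHom S L hle r = e.symm y := rfl
  rw [h2, ← h1, e.apply_symm_apply]

theorem piHom_Celt (hle : S ≤ nonZeroDivisors D) (d : D) :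
    piHom S L hle (Celt L d) = d := by
  apply IsLocalization.injective L hle
  rw [algebraMap_piHom]
  show (C (algebraMap D L d)).coeff 0 = _
  rw [Polynomial.coeff_C_zero]

theorem piHom_surjective (hle : S ≤ nonZeroDivisors D) :
    Function.Surjective (piHom S L hle) :=
  fun d => ⟨Celt L d, piHom_Celt hle d⟩

theorem mem_ker_piHom (hle : S ≤ nonZeroDivisors D)
    (r : ↥(composite ((algebraMap D L).range))) :
    r ∈ RingHom.ker (piHom S L hle) ↔ (r : L[X]).coeff 0 = 0 := by
  rw [RingHom.mem_ker]
  constructor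
  · intro h
    rw [← algebraMap_piHom hle r, h, map_zero]
  · intro h
    apply IsLocalization.injective L hle
    rw [algebraMap_piHom hle r, h, map_zero]

set_option maxHeartbeats 1000000 in
/-- Key maximality transfer: if the contraction of a maximal ideal avoiding `X`
to `D` is nonzero, then its contraction to `L` is maximal. -/
theorem max1 (hle : S ≤ nonZeroDivisors D)
    (hS : ∀ P : Ideal D, P.IsPrime → (∃ s ∈ S, s ∈ P) →
      ∀ Q : Ideal D, Q.IsPrime → Q ≠ ⊥ → Q ≤ P → ∃ s ∈ S, s ∈ Q)
    (hD : ∀ P : Ideal D, P.IsPrime → P.jacobson = P)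
    {M₂ : Ideal L[X]} (hM₂ : M₂.IsMaximal) (hX : X ∉ M₂)
    (hq : (M₂.comap (Polynomial.C : L →+* L[X])).comap (algebraMap D L) ≠ ⊥) :
    (M₂.comap (Polynomial.C : L →+* L[X])).IsMaximal := by
  haveI := hM₂.isPrime
  set m := M₂.comap (Polynomial.C : L →+* L[X]) with hm
  haveI hmprime : m.IsPrime := Ideal.IsPrime.comap _
  set q := m.comap (algebraMap D L) with hqdef
  haveI hqprime : q.IsPrime := Ideal.IsPrime.comap _
  -- q is disjoint from S
  have hqS : ∀ s ∈ S, s ∉ q := by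
    intro s hs hsq
    have h1 : algebraMap D L s ∈ m := hsq
    have hu : IsUnit (algebraMap D L s) := IsLocalization.map_units L ⟨s, hs⟩
    exact hmprime.ne_top (Ideal.eq_top_of_isUnit_mem m h1 hu)
  -- every element of S is a unit mod q
  have hunit : ∀ s ∈ S, IsUnit (Ideal.Quotient.mk q s) := by
    intro s hs
    by_contra hnu
    obtain ⟨𝔪', h𝔪'max, h𝔪'⟩ := Ideal.exists_le_maximal (Ideal.span {Ideal.Quotient.mk q s})
      (by rw [Ne, Ideal.span_singleton_eq_top]; exact hnu)
    set 𝔪 := 𝔪'.comap (Ideal.Quotient.mk q) with h𝔪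
    haveI h𝔪max : 𝔪.IsMaximal :=
      Ideal.comap_isMaximal_of_surjective _ Ideal.Quotient.mk_surjective
    have hs𝔪 : s ∈ 𝔪 := h𝔪' (Ideal.subset_span rfl)
    have hq𝔪 : q ≤ 𝔪 := fun x hx => by
      show Ideal.Quotient.mk q x ∈ 𝔪'
      rw [Ideal.Quotient.eq_zero_iff_mem.2 hx]
      exact 𝔪'.zero_mem
    obtain ⟨s', hs'S, hs'q⟩ := hS 𝔪 h𝔪max.isPrime ⟨s, hs, hs𝔪⟩ q hqprime hq hq𝔪
    exact hqS s' hs'S hs'q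
  -- the map ρ : D → L ⧸ m is surjective
  set ρ : D →+* L ⧸ m := (Ideal.Quotient.mk m).comp (algebraMap D L) with hρ
  have hρsurj : Function.Surjective ρ := by
    intro z
    obtain ⟨v, rfl⟩ := Ideal.Quotient.mk_surjective z
    obtain ⟨⟨d, s⟩, hds⟩ := IsLocalization.surj S v
    obtain ⟨c, hc⟩ := (hunit s s.2).exists_right_inv
    obtain ⟨e, he⟩ := Ideal.Quotient.mk_surjective (c * Ideal.Quotient.mk q d)
    refine ⟨e, ?_⟩
    have key : e * (s : D) - d ∈ q := by
      have h1 : Ideal.Quotient.mk q (e * (s : D) - d) = 0 := by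
        rw [map_sub, map_mul, he]
        linear_combination (Ideal.Quotient.mk q d) * hc
      exact Ideal.Quotient.eq_zero_iff_mem.1 h1
    have key2 : algebraMap D L e - v ∈ m := by
      have h1 : (algebraMap D L e - v) * algebraMap D L (s : D) =
          algebraMap D L (e * (s : D) - d) := by
        rw [map_sub, map_mul]
        linear_combination -hds
      have h2 : algebraMap D L (e * (s : D) - d) ∈ m := Ideal.mem_comap.mp key
      have h3 : algebraMap D L (s : D) ∉ m := fun h => hqS (s : D) s.2 h
      rcases hmprime.mem_or_mem (h1 ▸ h2) with h | h
      · exact h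
      · exact absurd h h3
    show Ideal.Quotient.mk m (algebraMap D L e) = Ideal.Quotient.mk m v
    exact (Ideal.Quotient.mk_eq_mk_iff_sub_mem _ _).2 key2
  have hkerρ : ∀ x : D, ρ x = 0 ↔ x ∈ q := by
    intro x
    show Ideal.Quotient.mk m (algebraMap D L x) = 0 ↔ _
    rw [Ideal.Quotient.eq_zero_iff_mem]
    exact (Ideal.mem_comap).symm
  haveI hDjac : IsJacobsonRing D := isJacobsonRing_iff_prime_eq.mpr hD
  haveI : IsJacobsonRing (D ⧸ q) :=
    isJacobsonRing_of_surjective ⟨Ideal.Quotient.mk q, Ideal.Quotient.mk_surjective⟩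
  have hbase0 : ∀ a ∈ q, ((Ideal.Quotient.mk M₂).comp
      ((Polynomial.C).comp (algebraMap D L))) a = 0 := by
    intro a ha
    show Ideal.Quotient.mk M₂ (C (algebraMap D L a)) = 0
    rw [Ideal.Quotient.eq_zero_iff_mem]
    exact Ideal.mem_comap.1 (Ideal.mem_comap.1 ha)
  set base : D ⧸ q →+* L[X] ⧸ M₂ := Ideal.Quotient.lift q _ hbase0 with hbase
  set σ : (D ⧸ q)[X] →+* L[X] ⧸ M₂ :=
    Polynomial.eval₂RingHom base (Ideal.Quotient.mk M₂ X) with hσ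
  have hσC : ∀ x : D ⧸ q, σ (Polynomial.C x) = base x := fun x => Polynomial.eval₂_C _ _
  have hσX : σ Polynomial.X = Ideal.Quotient.mk M₂ X := Polynomial.eval₂_X _ _
  have hbasemk : ∀ e : D,
      base (Ideal.Quotient.mk q e) = Ideal.Quotient.mk M₂ (C (algebraMap D L e)) :=
    fun e => Ideal.Quotient.lift_mk q _ hbase0
  have hσsurj : Function.Surjective σ := by
    intro y
    obtain ⟨t, rfl⟩ := Ideal.Quotient.mk_surjective y
    induction t using Polynomial.induction_on with
    | C u =>
      obtain ⟨e, he⟩ := hρsurj (Ideal.Quotient.mk m u)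
      refine ⟨Polynomial.C (Ideal.Quotient.mk q e), ?_⟩
      rw [hσC, hbasemk]
      rw [Ideal.Quotient.mk_eq_mk_iff_sub_mem, ← map_sub]
      have hem : algebraMap D L e - u ∈ m := by
        have h1 : Ideal.Quotient.mk m (algebraMap D L e) = Ideal.Quotient.mk m u := he
        exact (Ideal.Quotient.mk_eq_mk_iff_sub_mem _ _).1 h1
      exact Ideal.mem_comap.1 hem
    | add p q' hp hq' =>
      obtain ⟨x1, h1⟩ := hp
      obtain ⟨x2, h2⟩ := hq'
      exact ⟨x1 + x2, by rw [map_add, h1, h2, map_add]⟩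
    | monomial n u ih =>
      obtain ⟨x, hx⟩ := ih
      refine ⟨x * Polynomial.X, ?_⟩
      rw [map_mul, hx, hσX, ← map_mul]
      congr 1
      ring
  haveI hbotM₂ : (⊥ : Ideal (L[X] ⧸ M₂)).IsMaximal := (Ideal.bot_quotient_isMaximal_iff M₂).2 hM₂
  haveI hkermax : (RingHom.ker σ).IsMaximal := by
    rw [RingHom.ker_eq_comap_bot]
    exact Ideal.comap_isMaximal_of_surjective σ hσsurj
  haveI : Nontrivial (D ⧸ q) := Ideal.Quotient.nontrivial_iff.mpr hqprime.ne_top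
  have hker0 : ∀ x : D ⧸ q, Polynomial.C x ∈ RingHom.ker σ → x = 0 := by
    intro x hx
    obtain ⟨e, rfl⟩ := Ideal.Quotient.mk_surjective x
    rw [RingHom.mem_ker, hσC, hbasemk, Ideal.Quotient.eq_zero_iff_mem] at hx
    rw [Ideal.Quotient.eq_zero_iff_mem]
    exact Ideal.mem_comap.2 (Ideal.mem_comap.2 hx)
  have hbotmax : (Ideal.comap (Polynomial.C : (D ⧸ q) →+* (D ⧸ q)[X])
      (RingHom.ker σ)).IsMaximal :=
    Polynomial.isMaximal_comap_C_of_isMaximal (RingHom.ker σ) hker0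
  have hcomap_bot : Ideal.comap (Polynomial.C : (D ⧸ q) →+* (D ⧸ q)[X])
      (RingHom.ker σ) = ⊥ := by
    apply le_antisymm _ bot_le
    intro x hx
    rw [Ideal.mem_bot]
    exact hker0 x (Ideal.mem_comap.1 hx)
  rw [hcomap_bot] at hbotmax
  haveI hqmax : q.IsMaximal := (Ideal.bot_quotient_isMaximal_iff q).1 hbotmax
  haveI : Nontrivial (L ⧸ m) := Ideal.Quotient.nontrivial_iff.mpr hmprime.ne_top
  have hisf : IsField (L ⧸ m) := by
    refine ⟨exists_pair_ne _, mul_comm, ?_⟩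
    intro x hx
    obtain ⟨e, rfl⟩ := hρsurj x
    have he : e ∉ q := fun h => hx ((hkerρ e).2 h)
    obtain ⟨z, i, hiq, hzi⟩ := hqmax.exists_inv he
    refine ⟨ρ z, ?_⟩
    rw [← map_mul]
    have hez : e * z = 1 - i := by linear_combination hzi
    rw [hez, map_sub, map_one, (hkerρ i).2 hiq, sub_zero]
  exact Ideal.Quotient.maximal_of_isField m hisf

theorem isField_of_bot_isMaximal {K : Type*} [CommRing K] [Nontrivial K]
    (h : (⊥ : Ideal K).IsMaximal) : IsField K := by
  refine ⟨exists_pair_ne K, mul_comm, ?_⟩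
  intro a ha
  have hsp : Ideal.span {a} = ⊤ := by
    rcases eq_or_ne (Ideal.span {a}) ⊤ with h1 | h1
    · exact h1
    · exfalso
      have h2 := h.eq_of_le h1 bot_le
      apply ha
      have h3 : a ∈ Ideal.span {a} := Ideal.mem_span_singleton_self a
      rw [← h2, Ideal.mem_bot] at h3
      exact h3
  obtain ⟨b, hb⟩ := isUnit_iff_exists_inv.1 (Ideal.span_singleton_eq_top.1 hsp)
  exact ⟨b, hb⟩

theorem jacD_of_jacR (hle : S ≤ nonZeroDivisors D)
    (hR : ∀ P : Ideal ↥(composite ((algebraMap D L).range)), P.IsPrime → P.jacobson = P) :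
    ∀ P : Ideal D, P.IsPrime → P.jacobson = P := by
  intro p hp
  refine le_antisymm ?_ Ideal.le_jacobson
  intro f hf
  by_contra hfp
  set π := piHom S L hle with hπ
  set Q := p.comap π with hQ
  haveI hQp : Q.IsPrime := Ideal.IsPrime.comap _
  have hπs := piHom_surjective (S := S) (L := L) hle
  have hfQ : Celt L f ∉ Q := by
    intro h
    rw [hQ, Ideal.mem_comap, hπ, piHom_Celt] at h
    exact hfp h
  have hnj : Celt L f ∉ Q.jacobson := by rw [hR Q hQp]; exact hfQ
  rw [mem_jacobson_iff'] at hnj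
  push_neg at hnj
  obtain ⟨M, hQM, hMmax, hfM⟩ := hnj
  have hkerQ : RingHom.ker π ≤ Q := by
    intro x hx
    rw [RingHom.mem_ker] at hx
    rw [hQ, Ideal.mem_comap, hx]
    exact p.zero_mem
  have hkerM : RingHom.ker π ≤ M := le_trans hkerQ hQM
  set 𝔪 := M.map π with h𝔪
  have h𝔪max : 𝔪.IsMaximal := by
    rcases Ideal.map_eq_top_or_isMaximal_of_surjective π hπs hMmax with h | h
    · exfalso
      have h2 : M ⊔ Ideal.comap π ⊥ = ⊤ := by
        rw [← Ideal.comap_map_of_surjective π hπs M, h, Ideal.comap_top]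
      rw [← RingHom.ker_eq_comap_bot π, sup_eq_left.2 hkerM] at h2
      exact hMmax.ne_top h2
    · exact h
  have hp𝔪 : p ≤ 𝔪 := by
    have h1 : p = Q.map π := by
      rw [hQ, Ideal.map_comap_of_surjective π hπs]
    rw [h1, h𝔪]
    exact Ideal.map_mono hQM
  have hf𝔪 : f ∉ 𝔪 := by
    intro h
    have h2 : Celt L f ∈ 𝔪.comap π := by
      rw [Ideal.mem_comap, hπ, piHom_Celt]
      exact h
    rw [h𝔪, Ideal.comap_map_of_surjective π hπs, ← RingHom.ker_eq_comap_bot π,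
      sup_eq_left.2 hkerM] at h2
    exact hfM h2
  rw [mem_jacobson_iff'] at hf
  exact hf𝔪 (hf 𝔪 hp𝔪 h𝔪max)

theorem jacR_of_both (hle : S ≤ nonZeroDivisors D)
    (hD : ∀ P : Ideal D, P.IsPrime → P.jacobson = P)
    (hDS : ∀ P : Ideal L, P.IsPrime → P.jacobson = P) :
    ∀ P : Ideal ↥(composite ((algebraMap D L).range)), P.IsPrime → P.jacobson = P := by
  haveI : IsJacobsonRing L := isJacobsonRing_iff_prime_eq.mpr hDS
  set A := (algebraMap D L).range with hA
  intro Q hQ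
  refine le_antisymm ?_ Ideal.le_jacobson
  intro f hf
  by_contra hfQ
  by_cases hXQ : Xelt A ∈ Q
  · -- Q contains the kernel of π
    set π := piHom S L hle with hπ
    have hπs := piHom_surjective (S := S) (L := L) hle
    have hker : RingHom.ker π ≤ Q := by
      intro g hg
      rw [hπ, mem_ker_piHom] at hg
      obtain ⟨t, ht⟩ := Polynomial.X_dvd_iff.2 hg
      have hg2 : g * g = Xelt A * ⟨X * (t * t), X_mul_mem A _⟩ := by
        apply Subtype.ext
        show (g : L[X]) * (g : L[X]) = X * (X * (t * t))
        rw [ht]; ring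
      have h3 : g * g ∈ Q := hg2 ▸ Q.mul_mem_right _ hXQ
      rcases hQ.mem_or_mem h3 with h | h
      · exact h
      · exact h
    set q := Q.map π with hq
    haveI hqprime : q.IsPrime := Ideal.map_isPrime_of_surjective hπs hker
    have hcomapq : q.comap π = Q := by
      rw [hq, Ideal.comap_map_of_surjective π hπs, ← RingHom.ker_eq_comap_bot π,
        sup_eq_left.2 hker]
    have hfq : π f ∉ q := by
      intro h
      apply hfQ
      rw [← hcomapq]
      exact h
    have hnj : π f ∉ q.jacobson := by rw [hD q hqprime]; exact hfq
    rw [mem_jacobson_iff'] at hnj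
    push_neg at hnj
    obtain ⟨𝔪, hq𝔪, h𝔪max, hf𝔪⟩ := hnj
    haveI := h𝔪max
    have hMmax : (𝔪.comap π).IsMaximal := Ideal.comap_isMaximal_of_surjective π hπs
    have hQM : Q ≤ 𝔪.comap π := by
      rw [← hcomapq]
      exact Ideal.comap_mono hq𝔪
    rw [mem_jacobson_iff'] at hf
    exact hf𝔪 (hf _ hQM hMmax)
  · -- saturation route
    haveI : IsJacobsonRing L[X] := inferInstance
    set Q₂ := satIdeal A Q with hQ₂
    have hQ₂p : Q₂.IsPrime := satIdeal_isPrime hQ hXQ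
    have hcom : Q₂.comap (composite A).subtype = Q := comap_satIdeal hQ hXQ
    have hXQ₂ : X ∉ Q₂ := X_not_mem_satIdeal hQ hXQ
    have hfX : (f : L[X]) * X ∉ Q₂ := by
      intro h
      rcases hQ₂p.mem_or_mem h with h | h
      · apply hfQ
        rw [← hcom]
        exact h
      · exact hXQ₂ h
    have hjac := isJacobsonRing_iff_prime_eq.mp (inferInstance : IsJacobsonRing L[X]) Q₂ hQ₂p
    have hnj : (f : L[X]) * X ∉ Q₂.jacobson := by rw [hjac]; exact hfX
    rw [mem_jacobson_iff'] at hnj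
    push_neg at hnj
    obtain ⟨M₂, hQM₂, hM₂max, hfM₂⟩ := hnj
    have hXM₂ : X ∉ M₂ := fun h => hfM₂ (M₂.mul_mem_left _ h)
    have hfvM₂ : (f : L[X]) ∉ M₂ := fun h => hfM₂ (M₂.mul_mem_right _ h)
    have hMmax := comap_isMaximal_of_X_not_mem (A := A) hM₂max hXM₂
    have hQM : Q ≤ M₂.comap (composite A).subtype := by
      rw [← hcom]
      exact Ideal.comap_mono hQM₂
    rw [mem_jacobson_iff'] at hf
    exact hfvM₂ (hf _ hQM hMmax)

theorem Celt_val (d : D) : ((Celt L d : ↥(composite ((algebraMap D L).range))) : L[X])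
    = C (algebraMap D L d) := rfl

theorem jacL_of_jacR (hle : S ≤ nonZeroDivisors D)
    (hS : ∀ P : Ideal D, P.IsPrime → (∃ s ∈ S, s ∈ P) →
      ∀ Q : Ideal D, Q.IsPrime → Q ≠ ⊥ → Q ≤ P → ∃ s ∈ S, s ∈ Q)
    (hR : ∀ P : Ideal ↥(composite ((algebraMap D L).range)), P.IsPrime → P.jacobson = P) :
    ∀ P : Ideal L, P.IsPrime → P.jacobson = P := by
  have hD := jacD_of_jacR hle hR
  set A := (algebraMap D L).range with hA
  by_cases hLf : IsField L
  · -- the localization is a field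
    intro p hp
    have hpb : p = ⊥ := by
      apply le_antisymm _ bot_le
      intro x hx
      rw [Ideal.mem_bot]
      by_contra h0
      obtain ⟨y, hy⟩ := hLf.mul_inv_cancel h0
      exact hp.ne_top (Ideal.eq_top_of_isUnit_mem p hx (IsUnit.of_mul_eq_one y hy))
    haveI hbmax : (⊥ : Ideal L).IsMaximal := by
      letI := hLf.toField
      exact Ideal.bot_isMaximal
    refine le_antisymm ?_ Ideal.le_jacobson
    rw [hpb]
    intro x hx
    rw [mem_jacobson_iff'] at hx
    rw [Ideal.mem_bot] at *
    exact Ideal.mem_bot.1 (hx ⊥ le_rfl hbmax)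
  -- non-field case
  obtain ⟨m₀, hm₀max⟩ := Ideal.exists_maximal L
  have hm₀ne : m₀ ≠ ⊥ := by
    intro h
    exact hLf (isField_of_bot_isMaximal (h ▸ hm₀max))
  intro p hp
  refine le_antisymm ?_ Ideal.le_jacobson
  intro u hu
  by_contra hup
  -- the prime P₂ = p[X] of L[X]
  haveI : IsDomain (L ⧸ p) := Ideal.Quotient.isDomain p
  set P₂ := RingHom.ker (Polynomial.mapRingHom (Ideal.Quotient.mk p)) with hP₂
  haveI hP₂p : P₂.IsPrime := RingHom.ker_isPrime _
  have hmemC : ∀ v : L, C v ∈ P₂ ↔ v ∈ p := by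
    intro v
    rw [hP₂, RingHom.mem_ker, Polynomial.coe_mapRingHom, Polynomial.map_C,
      Polynomial.C_eq_zero, Ideal.Quotient.eq_zero_iff_mem]
  have hXP₂ : X ∉ P₂ := by
    rw [hP₂, RingHom.mem_ker, Polynomial.coe_mapRingHom, Polynomial.map_X]
    exact Polynomial.X_ne_zero
  have hmulX : ∀ v : L, C v * X ∈ P₂ ↔ v ∈ p := by
    intro v
    constructor
    · intro h
      rcases hP₂p.mem_or_mem h with h | h
      · exact (hmemC v).1 h
      · exact absurd h hXP₂
    · intro h
      exact P₂.mul_mem_right _ ((hmemC v).2 h)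
  set Q := P₂.comap (composite A).subtype with hQdef
  haveI hQp : Q.IsPrime := Ideal.IsPrime.comap _
  set uX : ↥(composite A) := ⟨C u * X, by
    show (C u * X).coeff 0 ∈ A
    rw [Polynomial.mul_coeff_zero, Polynomial.coeff_X_zero, mul_zero]
    exact A.zero_mem⟩ with huXdef
  have huXQ : uX ∉ Q := fun h => hup ((hmulX u).1 h)
  have hnj : uX ∉ Q.jacobson := by rw [hR Q hQp]; exact huXQ
  rw [mem_jacobson_iff'] at hnj
  push_neg at hnj
  obtain ⟨M, hQM, hMmax, huXM⟩ := hnj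
  have hXM : Xelt A ∉ M := by
    intro h
    apply huXM
    have h2 : uX * uX = Xelt A * ⟨C (u * u) * X, by
        show (C (u * u) * X).coeff 0 ∈ A
        rw [Polynomial.mul_coeff_zero, Polynomial.coeff_X_zero, mul_zero]
        exact A.zero_mem⟩ := by
      apply Subtype.ext
      show (C u * X) * (C u * X) = X * (C (u * u) * X)
      rw [Polynomial.C_mul]
      ring
    have h3 : uX * uX ∈ M := h2 ▸ M.mul_mem_right _ h
    rcases hMmax.isPrime.mem_or_mem h3 with h4 | h4
    · exact h4
    · exact h4
  set M₂ := satIdeal A M with hM₂def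
  have hM₂max : M₂.IsMaximal := satIdeal_isMaximal hMmax hXM
  haveI hM₂p : M₂.IsPrime := hM₂max.isPrime
  have hXM₂ : X ∉ M₂ := X_not_mem_satIdeal hMmax.isPrime hXM
  have hcomM : M₂.comap (composite A).subtype = M := comap_satIdeal hMmax.isPrime hXM
  have hP₂M₂ : P₂ ≤ M₂ := le_satIdeal hQM
  set m := M₂.comap (Polynomial.C : L →+* L[X]) with hmdef
  haveI hmp : m.IsPrime := Ideal.IsPrime.comap _
  have hpm : p ≤ m := by
    intro v hv
    exact Ideal.mem_comap.2 (hP₂M₂ ((hmemC v).2 hv))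
  have hum : u ∉ m := by
    intro h
    apply huXM
    rw [← hcomM]
    exact Ideal.mem_comap.2 (M₂.mul_mem_right _ (Ideal.mem_comap.1 h))
  by_cases hq : m.comap (algebraMap D L) = ⊥
  case neg =>
    have hmmax : m.IsMaximal := max1 hle hS hD hM₂max hXM₂ hq
    rw [mem_jacobson_iff'] at hu
    exact hum (hu m hpm hmmax)
  case pos =>
    -- Goldman situation
    have hm0 : m = ⊥ := comap_bot_of_bot hle hq
    have hcomap0 : ∀ x : L, C x ∈ M₂ → x = 0 := by
      intro x hx
      have h1 : x ∈ m := Ideal.mem_comap.2 hx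
      rw [hm0] at h1
      exact Ideal.mem_bot.1 h1
    obtain ⟨a, ha0, hacond⟩ := goldman hM₂max hcomap0
    obtain ⟨⟨a', s'⟩, ha's⟩ := IsLocalization.surj S a
    have ha'0 : algebraMap D L a' ≠ 0 := by
      rw [← ha's]
      intro h
      rcases mul_eq_zero.1 h with h1 | h1
      · exact ha0 h1
      · have hu' : IsUnit (algebraMap D L (s' : D)) := IsLocalization.map_units L s'
        exact hu'.ne_zero h1
    have hacond' : ∀ 𝔭 : Ideal L, 𝔭.IsPrime → 𝔭 ≠ ⊥ → algebraMap D L a' ∈ 𝔭 := by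
      intro 𝔭 h1 h2
      rw [← ha's]
      exact Ideal.mul_mem_right _ _ (hacond 𝔭 h1 h2)
    -- choose a prime over (X² - a') avoiding X
    have hXnotrad : (X : L[X]) ∉ (Ideal.span {X ^ 2 - C (algebraMap D L a')}).radical := by
      intro h
      obtain ⟨n, hn⟩ := Ideal.mem_radical_iff.1 h
      exact X_pow_not_mem_span ha'0 n hn
    rw [Ideal.radical_eq_sInf, Ideal.mem_sInf] at hXnotrad
    push_neg at hXnotrad
    obtain ⟨Q₂', hQ₂'mem, hXQ₂'⟩ := hXnotrad
    obtain ⟨hspanQ₂', hQ₂'p⟩ := hQ₂'mem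
    haveI := hQ₂'p
    have hg₀Q₂' : X ^ 2 - C (algebraMap D L a') ∈ Q₂' := hspanQ₂' (Ideal.subset_span rfl)
    set Q' := Q₂'.comap (composite A).subtype with hQ'def
    haveI hQ'p : Q'.IsPrime := Ideal.IsPrime.comap _
    have hcaQ' : Celt L a' ∉ Q' := by
      intro h
      apply hXQ₂'
      have h3 : ((Celt L a' : ↥(composite A)) : L[X]) ∈ Q₂' := h
      rw [Celt_val] at h3
      have h2 : (X : L[X]) ^ 2 ∈ Q₂' := by
        have h4 : ((X : L[X]) ^ 2) = (X ^ 2 - C (algebraMap D L a')) + C (algebraMap D L a') := by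
          ring
        rw [h4]
        exact Q₂'.add_mem hg₀Q₂' h3
      exact hQ₂'p.mem_of_pow_mem _ h2
    apply hcaQ'
    rw [← hR Q' hQ'p, mem_jacobson_iff']
    intro M' hQ'M' hM'max
    have hg₀mem : (X ^ 2 - C (algebraMap D L a') : L[X]) ∈ composite A := by
      show (X ^ 2 - C (algebraMap D L a')).coeff 0 ∈ A
      rw [Polynomial.coeff_sub, Polynomial.coeff_C_zero,
        show ((X : L[X]) ^ 2).coeff 0 = 0 by simp [Polynomial.coeff_X_pow], zero_sub]
      exact A.neg_mem ⟨a', rfl⟩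
    have hg₀Q' : (⟨X ^ 2 - C (algebraMap D L a'), hg₀mem⟩ : ↥(composite A)) ∈ Q' := by
      show (X ^ 2 - C (algebraMap D L a') : L[X]) ∈ Q₂'
      exact hg₀Q₂'
    by_cases hXM' : Xelt A ∈ M'
    · have hdecomp : Celt L a' = Xelt A * Xelt A -
          (⟨X ^ 2 - C (algebraMap D L a'), hg₀mem⟩ : ↥(composite A)) := by
        apply Subtype.ext
        show C (algebraMap D L a') = X * X - (X ^ 2 - C (algebraMap D L a'))
        ring
      rw [hdecomp]
      exact Ideal.sub_mem _ (M'.mul_mem_right _ hXM') (hQ'M' hg₀Q')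
    · exfalso
      set M₂' := satIdeal A M' with hM₂'def
      have hM₂'max : M₂'.IsMaximal := satIdeal_isMaximal hM'max hXM'
      haveI hM₂'p : M₂'.IsPrime := hM₂'max.isPrime
      have hXM₂' : X ∉ M₂' := X_not_mem_satIdeal hM'max.isPrime hXM'
      have hQ₂'M₂' : Q₂' ≤ M₂' := le_satIdeal hQ'M'
      have hg₀M₂' : X ^ 2 - C (algebraMap D L a') ∈ M₂' := hQ₂'M₂' hg₀Q₂'
      set m' := M₂'.comap (Polynomial.C : L →+* L[X]) with hm'def
      haveI hm'p : m'.IsPrime := Ideal.IsPrime.comap _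
      by_cases hm'0 : m' = ⊥
      · -- the computation `1/α = c + dα` leads to a contradiction with `m₀`
        have hcomap0' : ∀ x : L, C x ∈ M₂' → x = 0 := by
          intro x hx
          have h1 : x ∈ m' := Ideal.mem_comap.2 hx
          rw [hm'0] at h1
          exact Ideal.mem_bot.1 h1
        obtain ⟨z, i, hiM₂', hzi⟩ := hM₂'max.exists_inv hXM₂'
        obtain ⟨c, d, h, hzdecomp⟩ := decomp_mod_sq (algebraMap D L a') z
        set ab := algebraMap D L a'
        set E : L[X] := (X ^ 2 - C ab) * (C d + h * X) + i with hE
        have hEmem : E ∈ M₂' := M₂'.add_mem (M₂'.mul_mem_right _ hg₀M₂') hiM₂'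
        have hCw : (1 : L[X]) - C d * C ab = C c * X + E := by
          rw [hE]
          linear_combination -hzi + X * hzdecomp
        have hkey : C ((1 - d * ab) * (1 - d * ab) - c * c * ab) ∈ M₂' := by
          have hid : C ((1 - d * ab) * (1 - d * ab) - c * c * ab) =
              (C c * C c) * (X ^ 2 - C ab) + E * (2 * C c * X + E) := by
            simp only [map_sub, map_mul, map_one]
            rw [hCw]
            ring
          rw [hid]
          exact M₂'.add_mem (M₂'.mul_mem_left _ hg₀M₂') (M₂'.mul_mem_right _ hEmem)
        have hw0 : (1 - d * ab) * (1 - d * ab) - c * c * ab = 0 := hcomap0' _ hkey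
        have hab_m₀ : ab ∈ m₀ := hacond' m₀ hm₀max.isPrime hm₀ne
        have hw2 : (1 - d * ab) * (1 - d * ab) ∈ m₀ := by
          have h1 : (1 - d * ab) * (1 - d * ab) = c * c * ab := by linear_combination hw0
          rw [h1]
          exact m₀.mul_mem_left _ hab_m₀
        have hw : 1 - d * ab ∈ m₀ := (hm₀max.isPrime.mem_or_mem hw2).elim id id
        have h1 : (1 : L) ∈ m₀ := by
          have h2 : (1 : L) = (1 - d * ab) + d * ab := by ring
          rw [h2]
          exact m₀.add_mem hw (m₀.mul_mem_left _ hab_m₀)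
        exact hm₀max.ne_top (m₀.eq_top_iff_one.2 h1)
      · -- m' nonzero: the conductor lies in it, contradiction with X ∉ M₂'
        have hane : algebraMap D L a' ∈ m' := hacond' m' hm'p hm'0
        have h2 : C (algebraMap D L a') ∈ M₂' := Ideal.mem_comap.1 hane
        have h3 : (X : L[X]) ^ 2 ∈ M₂' := by
          have h4 : ((X : L[X]) ^ 2) = (X ^ 2 - C (algebraMap D L a')) + C (algebraMap D L a') := by
            ring
          rw [h4]
          exact M₂'.add_mem hg₀M₂' h2
        exact hXM₂' (hM₂'p.mem_of_pow_mem _ h3)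

end Main

end Stmt12Aux

/-- let `D` be an integral domain and `S` a multiplicatively closed set of
nonzero elements such that whenever a prime ideal of `D` meets `S`, every nonzero prime
ideal contained in it also meets `S`.  Then `R = D + X D_S[X]` is a Hilbert ring iff both
`D` and `D_S` are Hilbert rings. -/
theorem stmt12 {D : Type*} [CommRing D] [IsDomain D] (S : Submonoid D)
    (hS0 : ∀ s ∈ S, s ≠ (0 : D))
    (hS : ∀ P : Ideal D, P.IsPrime → (∃ s ∈ S, s ∈ P) →
      ∀ Q : Ideal D, Q.IsPrime → Q ≠ ⊥ → Q ≤ P → ∃ s ∈ S, s ∈ Q) :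
    IsHilbertRing (composite ((algebraMap D (Localization S)).range)) ↔
      IsHilbertRing D ∧ IsHilbertRing (Localization S) := by
  have hle : S ≤ nonZeroDivisors D := fun s hs => mem_nonZeroDivisors_of_ne_zero (hS0 s hs)
  haveI : IsDomain (Localization S) := IsLocalization.isDomain_of_le_nonZeroDivisors (Localization S) hle
  rw [Stmt12Aux.isHilbertRing_iff_jac, Stmt12Aux.isHilbertRing_iff_jac,
    Stmt12Aux.isHilbertRing_iff_jac]
  constructor
  · intro hR
    exact ⟨Stmt12Aux.jacD_of_jacR hle hR, Stmt12Aux.jacL_of_jacR hle hS hR⟩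
  · rintro ⟨hD, hDS⟩
    exact Stmt12Aux.jacR_of_both hle hD hDS
end

section
/- Let p be a prime, let K ⊆ L be fields of characteristic p with L purely inseparable over K, and let R be any subring of the polynomial ring L[X] containing K[X]. Then R has Krull dimension 1, and for all f, g ∈ R there exists a natural number n such that the ideal of R generated by f^(p^n) and g^(p^n) is a principal ideal. -/
open Polynomial

private lemma stmt13_mono {L : Type*} [Field L] (p : ℕ) (K : Subfield L)
    {l : L} {n m : ℕ} (h : l ^ p ^ n ∈ K) (hnm : n ≤ m) :
    l ^ p ^ m ∈ K := by
  have : l ^ p ^ m = (l ^ p ^ n) ^ p ^ (m - n) := by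
    rw [← pow_mul, ← pow_add, Nat.add_sub_cancel' hnm]
  rw [this]
  exact pow_mem h _

private lemma stmt13_coeff {L : Type*} [Field L] (p : ℕ) (hp : p.Prime) [CharP L p]
    (x : Polynomial L) (n i : ℕ) :
    (x ^ p ^ n).coeff i = (((expand L (p ^ n)) x).coeff i) ^ p ^ n := by
  haveI : ExpChar L p := .prime hp
  rw [← Polynomial.map_iterateFrobenius_expand p x n, coeff_map, iterateFrobenius_def]

private lemma stmt13_stable {L : Type*} [Field L] (p : ℕ) (hp : p.Prime) [CharP L p]
    (K : Subfield L) (x : Polynomial L) (hx : ∀ i, x.coeff i ∈ K) (n : ℕ) :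
    ∀ i, (x ^ p ^ n).coeff i ∈ K := by
  intro i
  rw [stmt13_coeff p hp x n i, coeff_expand (pow_pos hp.pos n)]
  split_ifs with h
  · exact pow_mem (hx _) _
  · rw [zero_pow (pow_pos hp.pos n).ne']
    exact zero_mem K

private lemma stmt13_key {L : Type*} [Field L] (p : ℕ) (hp : p.Prime) [CharP L p]
    (K : Subfield L) (hins : ∀ l : L, ∃ n : ℕ, l ^ p ^ n ∈ K) (x : Polynomial L) :
    ∃ n : ℕ, ∀ i, (x ^ p ^ n).coeff i ∈ K := by
  classical
  set n := x.support.sup fun i => Nat.find (hins (x.coeff i)) with hn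
  refine ⟨n, fun i => ?_⟩
  rw [stmt13_coeff p hp x n i, coeff_expand (pow_pos hp.pos n)]
  split_ifs with h
  · by_cases hi : i / p ^ n ∈ x.support
    · exact stmt13_mono p K (Nat.find_spec (hins (x.coeff (i / p ^ n))))
        (Finset.le_sup (f := fun i => Nat.find (hins (x.coeff i))) hi)
    · rw [Polynomial.notMem_support_iff.mp hi, zero_pow (pow_pos hp.pos n).ne']
      exact zero_mem K
  · rw [zero_pow (pow_pos hp.pos n).ne']
    exact zero_mem K

/-- let `p` be a prime, `K ⊆ L` fields of characteristic `p` with `L`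
purely inseparable over `K`, and let `R` be any subring of `L[X]` containing `K[X]`.
Then `R` has Krull dimension 1, and for all `f, g ∈ R` there is an `n` such that the
ideal generated by `f ^ p ^ n` and `g ^ p ^ n` is principal. -/
theorem stmt13 {L : Type*} [Field L] (p : ℕ) (hp : p.Prime) [CharP L p]
    (K : Subfield L) (hins : ∀ l : L, ∃ n : ℕ, l ^ p ^ n ∈ K)
    (R : Subring (Polynomial L))
    (hKR : ∀ f : Polynomial L, (∀ i, f.coeff i ∈ K) → f ∈ R) :
    ringKrullDim R = 1 ∧
      ∀ f g : R, ∃ n : ℕ,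
        (Ideal.span {f ^ p ^ n, g ^ p ^ n} : Ideal R).IsPrincipal := by
  classical
  have hmem : ∀ h : Polynomial K, Polynomial.map K.subtype h ∈ R := fun h =>
    hKR _ fun i => by rw [coeff_map]; exact SetLike.coe_mem _
  set ψ : Polynomial K →+* R :=
    RingHom.codRestrict (Polynomial.mapRingHom K.subtype) R hmem with hψ
  have hψcoe : ∀ h : Polynomial K, (ψ h : Polynomial L) = Polynomial.map K.subtype h :=
    fun h => rfl
  have hpow : ∀ x : Polynomial L, ∃ n : ℕ, x ^ p ^ n ∈ R := fun x => by
    obtain ⟨n, hn⟩ := stmt13_key p hp K hins x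
    exact ⟨n, hKR _ hn⟩
  have hlift : ∀ x : Polynomial L, (∀ i, x.coeff i ∈ K) →
      ∃ F : Polynomial K, (ψ F : Polynomial L) = x := by
    intro x hx
    obtain ⟨F, hF⟩ := (Polynomial.mem_lifts (f := K.subtype) x).mp
      ((Polynomial.lifts_iff_coeff_lifts x).mpr fun i => Set.mem_range.mpr ⟨⟨x.coeff i, hx i⟩, rfl⟩)
    refine ⟨F, ?_⟩
    rw [hψcoe, hF]
  constructor
  · -- Krull dimension is 1
    haveI hint : Algebra.IsIntegral R (Polynomial L) := by
      constructor
      intro x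
      obtain ⟨n, hn⟩ := hpow x
      refine IsIntegral.of_pow (pow_pos hp.pos n) ?_
      have : algebraMap R (Polynomial L) ⟨x ^ p ^ n, hn⟩ = x ^ p ^ n := rfl
      exact this ▸ isIntegral_algebraMap
    have hdim2 : ∀ a b c : PrimeSpectrum R, a < b → b < c → False := by
      intro a b c hab hbc
      obtain ⟨Q0, -, hQ0p, hQ0c⟩ :=
        Ideal.exists_ideal_over_prime_of_isIntegral a.asIdeal (⊥ : Ideal (Polynomial L))
          (fun x hx => by
            rw [Ideal.mem_comap, Ideal.mem_bot] at hx
            have hx0 : x = 0 := Subtype.ext hx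
            simp [hx0])
      haveI := hQ0p
      obtain ⟨Q1, hQ01, hQ1p, hQ1c⟩ :=
        Ideal.exists_ideal_over_prime_of_isIntegral b.asIdeal Q0 (hQ0c ▸ le_of_lt hab)
      haveI := hQ1p
      obtain ⟨Q2, hQ12, hQ2p, hQ2c⟩ :=
        Ideal.exists_ideal_over_prime_of_isIntegral c.asIdeal Q1 (hQ1c ▸ le_of_lt hbc)
      haveI := hQ2p
      have hQ01' : Q0 < Q1 := lt_of_le_of_ne hQ01 (by
        rintro rfl; exact absurd (hQ0c.symm.trans hQ1c) (ne_of_lt hab))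
      have hQ1ne : Q1 ≠ ⊥ := by
        rintro rfl; exact absurd (bot_le : (⊥:Ideal (Polynomial L)) ≤ Q0) (not_le_of_gt hQ01')
      have hQ1max : Q1.IsMaximal := IsPrime.to_maximal_ideal hQ1ne
      have hQ12' : Q1 < Q2 := lt_of_le_of_ne hQ12 (by
        rintro rfl; exact absurd (hQ1c.symm.trans hQ2c) (ne_of_lt hbc))
      exact ne_of_lt hQ12' (hQ1max.eq_of_le hQ2p.ne_top hQ12)
    have hX : (X : Polynomial L) ∈ R := hKR X fun i => by
      rw [Polynomial.coeff_X]
      split_ifs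
      exacts [one_mem K, zero_mem K]
    have hXprime : (Ideal.span {(X : Polynomial L)}).IsPrime :=
      (Ideal.span_singleton_prime Polynomial.X_ne_zero).mpr Polynomial.prime_X
    set q1 : Ideal R := Ideal.comap R.subtype (Ideal.span {(X : Polynomial L)}) with hq1
    haveI hq1p : q1.IsPrime := hXprime.comap _
    have hlt : (⊥ : Ideal R) < q1 := by
      refine lt_of_le_of_ne bot_le ?_
      intro h
      have hXq : (⟨X, hX⟩ : R) ∈ q1 := by
        show R.subtype ⟨X, hX⟩ ∈ Ideal.span {(X : Polynomial L)}
        exact Ideal.subset_span rfl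
      rw [← h] at hXq
      rw [Ideal.mem_bot] at hXq
      exact Polynomial.X_ne_zero (R := L) (congrArg Subtype.val hXq)
    
    refine le_antisymm ?_ ?_
    · show Order.krullDim (PrimeSpectrum R) ≤ 1
      rw [Order.krullDim_eq_iSup_length]
      rw [show (1 : WithBot ℕ∞) = ((1 : ℕ∞) : WithBot ℕ∞) from rfl, WithBot.coe_le_coe]
      refine iSup_le fun s => ?_
      by_contra hcon
      push_neg at hcon
      have h2 : 2 ≤ s.length := by exact_mod_cast hcon
      have h01 : (⟨0, by omega⟩ : Fin (s.length + 1)) < ⟨1, by omega⟩ := by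
        simp [Fin.lt_def]
      have h12 : (⟨1, by omega⟩ : Fin (s.length + 1)) < ⟨2, by omega⟩ := by
        simp [Fin.lt_def]
      exact hdim2 _ _ _ (s.strictMono h01) (s.strictMono h12)
    · show (1 : WithBot ℕ∞) ≤ Order.krullDim (PrimeSpectrum R)
      let a : PrimeSpectrum R := ⟨⊥, Ideal.bot_prime⟩
      let b : PrimeSpectrum R := ⟨q1, hq1p⟩
      have hab : a < b := hlt
      have := Order.LTSeries.length_le_krullDim ((RelSeries.singleton _ a).snoc b hab)
      exact le_trans (le_of_eq rfl) this
  · -- the principal-ideal statement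
    intro f g
    obtain ⟨n₁, hn₁⟩ := stmt13_key p hp K hins (f : Polynomial L)
    obtain ⟨n₂, hn₂⟩ := stmt13_key p hp K hins (g : Polynomial L)
    set n := max n₁ n₂ with hndef
    have hsplit : ∀ (x : Polynomial L) (m : ℕ), m ≤ n →
        (∀ i, (x ^ p ^ m).coeff i ∈ K) → ∀ i, (x ^ p ^ n).coeff i ∈ K := by
      intro x m hm hx i
      have : x ^ p ^ n = (x ^ p ^ m) ^ p ^ (n - m) := by
        rw [← pow_mul, ← pow_add, Nat.add_sub_cancel' hm]
      rw [this]
      exact stmt13_stable p hp K _ hx _ i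
    obtain ⟨F, hF⟩ := hlift _ (hsplit _ n₁ (le_max_left _ _) hn₁)
    obtain ⟨G, hG⟩ := hlift _ (hsplit _ n₂ (le_max_right _ _) hn₂)
    have hfe : f ^ p ^ n = ψ F := by
      apply Subtype.ext
      rw [hF]
      push_cast
      rfl
    have hge : g ^ p ^ n = ψ G := by
      apply Subtype.ext
      rw [hG]
      push_cast
      rfl
    refine ⟨n, ?_⟩
    rw [hfe, hge]
    refine ⟨⟨ψ (EuclideanDomain.gcd F G), le_antisymm ?_ ?_⟩⟩
    · rw [Ideal.span_le]
      rintro x (rfl | hx)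
      · exact Ideal.mem_span_singleton.mpr (map_dvd ψ (EuclideanDomain.gcd_dvd_left F G))
      · rw [Set.mem_singleton_iff] at hx
        subst hx
        exact Ideal.mem_span_singleton.mpr (map_dvd ψ (EuclideanDomain.gcd_dvd_right F G))
    · show Ideal.span {ψ (EuclideanDomain.gcd F G)} ≤ _
      rw [Ideal.span_le, Set.singleton_subset_iff]
      refine Ideal.mem_span_pair.mpr
        ⟨ψ (EuclideanDomain.gcdA F G), ψ (EuclideanDomain.gcdB F G), ?_⟩
      rw [← map_mul, ← map_mul, ← map_add]
      refine congrArg ψ ?_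
      rw [mul_comm (EuclideanDomain.gcdA F G) F, mul_comm (EuclideanDomain.gcdB F G) G,
        ← EuclideanDomain.gcd_eq_gcd_ab]
end

section
/- Let A ⊆ B be integral domains and let R = A+XB[X]. Then R is integrally closed (in its field of fractions) if and only if B is integrally closed (in its field of fractions) and A is integrally closed in B (i.e., every element of B integral over A lies in A). -/
set_option maxHeartbeats 1000000


open Polynomial

namespace Stmt14Aux
set_option linter.unusedSectionVars false
variable {B : Type*} [CommRing B] [IsDomain B] (A : Subring B)

/-- constant coefficient ring hom from `composite A` to `A`. -/
def pi : ↥(composite A) →+* ↥A where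
  toFun g := ⟨(g : Polynomial B).coeff 0, g.2⟩
  map_one' := Subtype.ext (by simp)
  map_mul' g h := Subtype.ext (by simpa using Polynomial.mul_coeff_zero _ _)
  map_zero' := Subtype.ext (by simp)
  map_add' g h := Subtype.ext (by simp)

/-- key scaling lemma -/
lemma key_scale {K : Type*} [Field K]
    (φ : Polynomial B →+* K) {z : K} {p : Polynomial (Polynomial B)} (hp : p.Monic)
    (hz : eval₂ φ z p = 0) :
    ∃ q : Polynomial ↥(composite A), q.Monic ∧
      eval₂ (φ.comp (composite A).subtype) (φ X * z) q = 0 := by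
  have hc : (↑(p.scaleRoots X).coeffs : Set (Polynomial B)) ⊆ ↑(composite A) := by
    intro f hf
    simp only [Finset.mem_coe, mem_coeffs_iff] at hf
    obtain ⟨i, hi, rfl⟩ := hf
    show ((p.scaleRoots X).coeff i).coeff 0 ∈ A
    rcases lt_trichotomy i p.natDegree with h | h | h
    · have hx : ((X : Polynomial B) ^ (p.natDegree - i)).coeff 0 = 0 := by
        rw [coeff_X_pow]
        simp [Nat.sub_ne_zero_of_lt h |>.symm]
      rw [coeff_scaleRoots, mul_coeff_zero, hx, mul_zero]
      exact A.zero_mem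
    · rw [h, coeff_scaleRoots_natDegree, hp.leadingCoeff]
      simpa using A.one_mem
    · rw [coeff_scaleRoots, coeff_eq_zero_of_natDegree_lt h, zero_mul]
      simpa using A.zero_mem
  refine ⟨(p.scaleRoots X).toSubring (composite A) hc, ?_, ?_⟩
  · rw [monic_toSubring]
    exact (monic_scaleRoots_iff X).mpr hp
  · rw [← eval₂_map, map_toSubring]
    exact scaleRoots_eval₂_eq_zero φ hz

end Stmt14Aux


open Stmt14Aux in
/-- for integral domains `A ⊆ B` and `R = A + XB[X]`, `R` is integrally
closed (in its fraction field) iff `B` is integrally closed (in its fraction field) and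
`A` is integrally closed in `B` (every element of `B` integral over `A` lies in `A`). -/
theorem stmt14 {B : Type*} [CommRing B] [IsDomain B] (A : Subring B) :
    IsIntegrallyClosed (composite A) ↔
      IsIntegrallyClosed B ∧ ∀ b : B, IsIntegral A b → b ∈ A := by
  classical
  set K := FractionRing (Polynomial B) with hKdef
  set φ : Polynomial B →+* K := algebraMap (Polynomial B) K with hφdef
  have φinj : Function.Injective φ := IsFractionRing.injective _ _
  set ψ : B →+* K := φ.comp Polynomial.C with hψdef
  have ψinj : Function.Injective ψ := φinj.comp Polynomial.C_injective
  letI : Algebra ↥(composite A) K := (φ.comp (composite A).subtype).toAlgebra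
  have halg : ∀ g : ↥(composite A), algebraMap ↥(composite A) K g = φ ↑g := fun g => rfl
  haveI hFR : IsFractionRing ↥(composite A) K := by
    refine (isLocalization_iff _ _).mpr ⟨?map_units', ?surj', ?exists_of_eq⟩
    case map_units' =>
      rintro ⟨y, hy⟩
      have hy0 : (y : Polynomial B) ≠ 0 := by
        intro h
        have : y = 0 := Subtype.ext h
        exact (nonZeroDivisors.ne_zero hy) this
      exact isUnit_iff_ne_zero.mpr (fun h => hy0 (φinj (by simpa [halg] using h)))
    case surj' =>
      intro z
      obtain ⟨⟨f, s⟩, hfs⟩ := IsLocalization.surj (nonZeroDivisors (Polynomial B)) z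
      have hs0 : (s : Polynomial B) ≠ 0 := nonZeroDivisors.ne_zero s.2
      have hmemf : (f * X : Polynomial B) ∈ composite A := by
        show (f * X).coeff 0 ∈ A
        simp [mul_coeff_zero, A.zero_mem]
      have hmems : ((s : Polynomial B) * X : Polynomial B) ∈ composite A := by
        show ((s : Polynomial B) * X).coeff 0 ∈ A
        simp [mul_coeff_zero, A.zero_mem]
      refine ⟨⟨⟨_, hmemf⟩, ⟨⟨_, hmems⟩, ?_⟩⟩, ?_⟩
      · exact mem_nonZeroDivisors_of_ne_zero (by
          intro h
          exact mul_ne_zero hs0 X_ne_zero (congrArg Subtype.val h))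
      · show z * φ ((s : Polynomial B) * X) = φ (f * X)
        rw [map_mul, map_mul, ← mul_assoc, hfs]
    case exists_of_eq =>
      intro x y h
      have : x = y := Subtype.ext (φinj (by simpa [halg] using h))
      exact ⟨1, by rw [this]⟩
  have hRiff := isIntegrallyClosed_iff (R := ↥(composite A)) K
  -- the fraction field of B and induced maps
  set F := FractionRing B with hFdef
  set ν : F →+* K := IsFractionRing.lift ψinj with hνdef
  have hν : ∀ b : B, ν (algebraMap B F b) = ψ b := fun b => IsFractionRing.lift_algebraMap ψinj b
  have νinj : Function.Injective ν := ν.injective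
  set μ : Polynomial F →+* K := eval₂RingHom ν (φ X) with hμdef
  have hμmap : μ.comp (mapRingHom (algebraMap B F)) = φ := by
    apply ringHom_ext
    · intro b
      simp [hμdef, hν b, hψdef]
    · simp [hμdef]
  have hμφ : ∀ f : Polynomial B, μ (f.map (algebraMap B F)) = φ f := fun f => by
    rw [← hμmap]; rfl
  have hsmul : ∀ (b : B) (Q : Polynomial F),
      (b • Q : Polynomial F) = Polynomial.C (algebraMap B F b) * Q := fun b Q =>
    Polynomial.ext fun i => by rw [coeff_smul, coeff_C_mul, Algebra.smul_def]
  have μinj : Function.Injective μ := by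
    rw [injective_iff_map_eq_zero]
    intro Q hQ
    obtain ⟨d, hd⟩ := IsLocalization.integerNormalization_map_to_map (nonZeroDivisors B) Q
    have h2 := congrArg μ hd
    rw [hμφ, hsmul, map_mul] at h2
    rw [hQ, mul_zero] at h2
    have : IsLocalization.integerNormalization (nonZeroDivisors B) Q = 0 := φinj (by simpa using h2)
    rw [this, Polynomial.map_zero] at hd
    have hd0 : algebraMap B F (d : B) ≠ 0 := fun h =>
      nonZeroDivisors.ne_zero d.2 ((IsFractionRing.injective B F) (by simpa using h))
    have := hd.symm
    rw [hsmul] at this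
    rcases mul_eq_zero.mp this with h | h
    · exact absurd (by simpa using h) hd0
    · exact h
  letI : Algebra (Polynomial F) K := μ.toAlgebra
  have halgF : ∀ q : Polynomial F, algebraMap (Polynomial F) K q = μ q := fun _ => rfl
  haveI hFRF : IsFractionRing (Polynomial F) K := by
    refine (isLocalization_iff _ _).mpr ⟨?map_units', ?surj', ?exists_of_eq⟩
    case map_units' =>
      rintro ⟨y, hy⟩
      have hy0 : y ≠ 0 := nonZeroDivisors.ne_zero hy
      exact isUnit_iff_ne_zero.mpr (fun h => hy0 (μinj (by simpa [halgF] using h)))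
    case surj' =>
      intro z
      obtain ⟨⟨f, s⟩, hfs⟩ := IsLocalization.surj (nonZeroDivisors (Polynomial B)) z
      have hs0 : (s : Polynomial B) ≠ 0 := nonZeroDivisors.ne_zero s.2
      have hsmap : ((s : Polynomial B).map (algebraMap B F)) ≠ 0 := by
        intro h
        exact hs0 (Polynomial.map_injective _ (IsFractionRing.injective B F) (by simpa using h))
      refine ⟨⟨f.map (algebraMap B F), ⟨_, mem_nonZeroDivisors_of_ne_zero hsmap⟩⟩, ?_⟩
      show z * μ ((s : Polynomial B).map (algebraMap B F)) = μ (f.map (algebraMap B F))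
      rw [hμφ, hμφ]
      exact hfs
    case exists_of_eq =>
      intro x y h
      have : x = y := μinj (by simpa [halgF] using h)
      exact ⟨1, by rw [this]⟩
  constructor
  · -- forward direction
    intro hR
    have hRmp : ∀ {x : K}, IsIntegral (↥(composite A)) x → ∃ y, algebraMap ↥(composite A) K y = x :=
      hRiff.mp hR
    constructor
    · -- B is integrally closed
      rw [isIntegrallyClosed_iff (FractionRing B)]
      intro t ht
      obtain ⟨p, hpm, hp⟩ := ht
      have h1 : eval₂ ψ (ν t) p = 0 := by
        have h := congrArg ν hp
        rw [hom_eval₂, map_zero] at h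
        have hc : ν.comp (algebraMap B F) = ψ := RingHom.ext hν
        rwa [hc] at h
      have h2 : eval₂ φ (ν t) (p.map Polynomial.C) = 0 := by
        rw [eval₂_map]; exact h1
      obtain ⟨q, hqm, hq⟩ := key_scale A φ (hpm.map _) h2
      have hint : IsIntegral ↥(composite A) (φ X * ν t) := ⟨q, hqm, hq⟩
      obtain ⟨g, hg⟩ := hRmp hint
      rw [halg] at hg
      obtain ⟨⟨s, r⟩, hsr⟩ := IsLocalization.surj (nonZeroDivisors B) t
      have hsr' : ν t * ψ (r : B) = ψ s := by
        have h := congrArg ν hsr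
        rwa [map_mul, hν, hν] at h
      have key : φ ((g : Polynomial B) * Polynomial.C (r : B)) = φ (X * Polynomial.C s) := by
        rw [map_mul, map_mul, hg]
        show φ X * ν t * ψ (r : B) = φ X * ψ s
        rw [mul_assoc, hsr']
      have key2 : (g : Polynomial B) * Polynomial.C (r : B) = X * Polynomial.C s := φinj key
      have hcoeff : (g : Polynomial B).coeff 1 * (r : B) = s := by
        have h := congrArg (fun p : Polynomial B => p.coeff 1) key2
        simp only [coeff_mul_C] at h
        simpa using h
      refine ⟨(g : Polynomial B).coeff 1, ?_⟩
      apply νinj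
      rw [hν]
      have hr0 : ψ (r : B) ≠ 0 := fun h =>
        nonZeroDivisors.ne_zero r.2 (ψinj (by simpa using h))
      have h3 : ψ ((g : Polynomial B).coeff 1) * ψ (r : B) = ν t * ψ (r : B) := by
        rw [hsr', ← map_mul, hcoeff]
      exact mul_right_cancel₀ hr0 h3
    · -- A is integrally closed in B
      intro b hb
      obtain ⟨p, hpm, hp⟩ := hb
      set ι : ↥A →+* ↥(composite A) :=
        { toFun := fun a => ⟨Polynomial.C (a : B), by
            show (Polynomial.C (a : B)).coeff 0 ∈ A; simpa using a.2⟩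
          map_one' := Subtype.ext (by simp)
          map_mul' := fun x y => Subtype.ext (by simp)
          map_zero' := Subtype.ext (by simp)
          map_add' := fun x y => Subtype.ext (by simp) } with hι
      have hint : IsIntegral ↥(composite A) (ψ b) := by
        refine ⟨p.map ι, hpm.map _, ?_⟩
        rw [eval₂_map]
        have hcomp : (algebraMap ↥(composite A) K).comp ι = ψ.comp (algebraMap ↥A B) := rfl
        rw [hcomp, ← hom_eval₂, hp, map_zero]
      obtain ⟨g, hg⟩ := hRmp hint
      rw [halg] at hg
      have hgC : (g : Polynomial B) = Polynomial.C b := φinj hg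
      have hmem : (Polynomial.C b).coeff 0 ∈ A := by
        have h2 := g.2
        rwa [hgC] at h2
      simpa using hmem
  · -- backward direction
    rintro ⟨hB, hA⟩
    haveI := hB
    rw [hRiff]
    intro z hz
    obtain ⟨P, hPm, hP⟩ := hz
    set Pm : Polynomial (Polynomial B) := P.map (composite A).subtype with hPmdef
    have hPmm : Pm.Monic := hPm.map _
    have hz' : eval₂ φ z Pm = 0 := by rw [hPmdef, eval₂_map]; exact hP
    have hzF : IsIntegral (Polynomial F) z := by
      refine ⟨Pm.map (mapRingHom (algebraMap B F)), hPmm.map _, ?_⟩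
      show eval₂ μ z _ = 0
      rw [eval₂_map, hμmap]
      exact hz'
    obtain ⟨q, hq⟩ := (isIntegrallyClosed_iff (R := Polynomial F) K).mp inferInstance hzF
    rw [halgF] at hq
    have hq0 : eval₂ (mapRingHom (algebraMap B F)) q Pm = 0 := by
      apply μinj
      rw [map_zero, hom_eval₂, hμmap, hq]
      exact hz'
    have hGq : (Pm.map (mapRingHom (algebraMap B F))).eval q = 0 := by
      rw [eval_map]; exact hq0
    set n := Pm.natDegree with hn
    have hn0 : 0 < n := by
      rcases Nat.eq_zero_or_pos n with h | h
      · exfalso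
        have : Pm = 1 := hPmm.natDegree_eq_zero.mp h
        rw [this, eval₂_one] at hz'
        exact one_ne_zero hz'
      · exact h
    set D := (Finset.range (n + 1)).sup (fun i => (Pm.coeff i).natDegree) with hD
    set N := D + q.natDegree + 1 with hN
    set h₀ : Polynomial B := Pm.eval ((X : Polynomial B) ^ N) with hh₀
    have hmon : h₀.Monic := by
      have hsplit : h₀ = (X : Polynomial B) ^ (N * n) +
          ∑ i ∈ Finset.range n, Pm.coeff i * (X : Polynomial B) ^ (N * i) := by
        rw [hh₀, eval_eq_sum_range, Finset.sum_range_succ, ← hn, hPmm.coeff_natDegree, one_mul,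
          add_comm, pow_mul]
        congr 1
        exact Finset.sum_congr rfl fun i _ => by rw [pow_mul]
      rw [hsplit]
      apply monic_X_pow_add
      apply lt_of_le_of_lt (degree_sum_le _ _)
      rw [Finset.sup_lt_iff (by exact WithBot.bot_lt_coe _)]
      intro i hi
      rw [Finset.mem_range] at hi
      apply lt_of_le_of_lt (degree_mul_le _ _)
      have h1 : (Pm.coeff i).degree ≤ (D : WithBot ℕ) := by
        apply le_trans (degree_le_natDegree)
        exact_mod_cast Finset.le_sup (f := fun i => (Pm.coeff i).natDegree)
          (Finset.mem_range.mpr (Nat.lt_succ_of_lt hi))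
      apply lt_of_le_of_lt (add_le_add h1 (degree_X_pow _).le)
      rw [← Nat.cast_add, Nat.cast_lt]
      calc D + N * i < N + N * i := by omega
        _ = N * (i + 1) := by ring
        _ ≤ N * n := Nat.mul_le_mul_left N hi
    have hrq : ((X : Polynomial F) ^ N - q).Monic := by
      apply monic_X_pow_sub
      apply lt_of_le_of_lt (degree_le_natDegree)
      rw [Nat.cast_lt]
      omega
    have hdvd : ((X : Polynomial F) ^ N - q) ∣ h₀.map (algebraMap B F) := by
      have hmap' : ∀ t : Polynomial B, (Pm.eval t).map (algebraMap B F) =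
          eval₂ (mapRingHom (algebraMap B F)) (t.map (algebraMap B F)) Pm := by
        intro t
        have h := hom_eval₂ Pm (RingHom.id (Polynomial B)) (mapRingHom (algebraMap B F)) t
        simpa [RingHom.comp_id] using h
      have hmapeval : h₀.map (algebraMap B F) =
          (Pm.map (mapRingHom (algebraMap B F))).eval ((X : Polynomial F) ^ N) := by
        rw [eval_map, hh₀, hmap' (X ^ N)]
        simp
      have h := sub_dvd_eval_sub ((X : Polynomial F) ^ N) q
        (Pm.map (mapRingHom (algebraMap B F)))
      rw [hGq, sub_zero] at h
      rw [hmapeval]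
      exact h
    obtain ⟨g', hg'⟩ := IsIntegrallyClosed.eq_map_mul_C_of_dvd (R := B) F hmon hdvd
    rw [hrq.leadingCoeff, map_one, mul_one] at hg'
    set f : Polynomial B := (X : Polynomial B) ^ N - g' with hf
    have hfq : f.map (algebraMap B F) = q := by
      rw [hf, Polynomial.map_sub, Polynomial.map_pow, map_X, hg']
      ring
    have hφf : φ f = z := by rw [← hq, ← hfq, hμφ]
    have hfP : eval₂ (composite A).subtype f P = 0 := by
      apply φinj
      rw [map_zero, hom_eval₂, hφf]
      exact hP
    have hc0 : IsIntegral ↥A (f.coeff 0) := by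
      refine ⟨P.map (pi A), hPm.map _, ?_⟩
      rw [eval₂_map]
      have hcc : (algebraMap ↥A B).comp (pi A) =
          (constantCoeff).comp (composite A).subtype := rfl
      have hcf : f.coeff 0 = constantCoeff (f : Polynomial B) := rfl
      rw [hcc, hcf, ← hom_eval₂, hfP, map_zero]
    exact ⟨⟨f, hA _ hc0⟩, by rw [halg]; exact hφf⟩
end
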